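/- arXiv:2602.21241 — 8 statements merged into one kernel-verified Lean document; each statement's English description precedes it below -/
import Mathlib

section
/- Let I₀ and I₁ be the modified Bessel functions of integer order. Then the function μ ↦ I₁(μ)/I₀(μ) is strictly increasing on ℝ, and I₁(μ)/I₀(μ) tends to 1 as μ → +∞. -/
open Real Filter

/-- The modified Bessel function of integer order `n`:
`Iₙ(μ) = (1/(2π)) ∫₀^{2π} e^{μ cos θ} cos (n θ) dθ`. -/
noncomputable def besselI (n : ℤ) (μ : ℝ) : ℝ :=
  (1 / (2 * Real.pi)) * ∫ θ in (0:ℝ)..(2 * Real.pi),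
    Real.exp (μ * Real.cos θ) * Real.cos ((n : ℝ) * θ)

/-!
`I₁(μ)/I₀(μ)` is the mean of `cos` on `[0, 2π]` under the weight `exp (μ cos θ)`, and both
claims hold for the mean `m(μ)` of any continuous, non-constant `g` on `[a, b]`.

Passing from `μ` to `ν > μ` multiplies the weight by `exp ((ν - μ) g)`, which exceeds its value
at `c = m(μ)` exactly where `g > c`; since `exp (μ g) (g - c)` has integral zero, this makes
`exp (ν g) (g - c)` have positive integral, i.e. `m(ν) > c`.

For the limit, let `M = g θ₀` be the maximum and `s = M - η`. The inequality `x ≤ exp x` gives,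
pointwise, `μ (s - g) exp (μ g) ≤ exp (μ s)` and `μ (g - s)⁺ exp (μ s) ≤ exp (μ g)`. Integrating,
the total weight is at least `μ κ exp (μ s)` with `κ = ∫ (g - s)⁺ > 0`, while `∫ (s - g) exp (μ g)`
is at most `(b - a) exp (μ s) / μ`, so `m(μ) ≥ M - η - (b - a) / (κ μ²)`.
-/

open Set intervalIntegral

theorem StrictMono.sub_mul_sub_pos {f : ℝ → ℝ} (hf : StrictMono f) {x c : ℝ} (hxc : x ≠ c) :
    0 < (x - c) * (f x - f c) := by
  rcases hxc.lt_or_gt with h | h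
  · exact mul_pos_of_neg_of_neg (sub_neg.2 h) (sub_neg.2 (hf h))
  · exact mul_pos (sub_pos.2 h) (sub_pos.2 (hf h))

theorem StrictMono.sub_mul_sub_nonneg {f : ℝ → ℝ} (hf : StrictMono f) (x c : ℝ) :
    0 ≤ (x - c) * (f x - f c) := by
  rcases eq_or_ne x c with rfl | hxc
  · simp
  · exact (hf.sub_mul_sub_pos hxc).le

noncomputable def tiltedMean (g : ℝ → ℝ) (a b μ : ℝ) : ℝ :=
  (∫ θ in a..b, exp (μ * g θ) * g θ) / ∫ θ in a..b, exp (μ * g θ)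

section TiltedMean

variable {g : ℝ → ℝ} {a b : ℝ}

lemma integral_exp_mul_pos (hab : a < b) (hg : Continuous g) (μ : ℝ) :
    0 < ∫ θ in a..b, exp (μ * g θ) :=
  intervalIntegral_pos_of_pos ((by fun_prop : Continuous _).intervalIntegrable _ _)
    (fun _ ↦ exp_pos _) hab

lemma integral_exp_mul_mul_sub (hab : a < b) (hg : Continuous g) (μ c : ℝ) :
    ∫ θ in a..b, exp (μ * g θ) * (g θ - c) =
      (tiltedMean g a b μ - c) * ∫ θ in a..b, exp (μ * g θ) := by
  simp_rw [mul_sub]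
  rw [integral_sub (by apply Continuous.intervalIntegrable; fun_prop)
      (by apply Continuous.intervalIntegrable; fun_prop),
    integral_mul_const, tiltedMean, sub_mul,
    div_mul_cancel₀ _ (integral_exp_mul_pos hab hg μ).ne', mul_comm]

theorem tiltedMean_strictMono (hab : a < b) (hg : Continuous g) {x y : ℝ} (hx : x ∈ Icc a b)
    (hy : y ∈ Icc a b) (hxy : g x ≠ g y) : StrictMono (tiltedMean g a b) := by
  intro μ ν hμν
  set c := tiltedMean g a b μ
  have hexp : StrictMono fun x ↦ exp ((ν - μ) * x) :=
    exp_strictMono.comp (strictMono_mul_left_of_pos (sub_pos.2 hμν))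
  have hμ : ∫ θ in a..b, exp (μ * g θ) * (g θ - c) = 0 := by
    rw [integral_exp_mul_mul_sub hab hg, sub_self, zero_mul]
  have hsplit : ∀ θ, exp (ν * g θ) * (g θ - c) =
      exp (μ * g θ) * ((g θ - c) * (exp ((ν - μ) * g θ) - exp ((ν - μ) * c))) +
        exp ((ν - μ) * c) * (exp (μ * g θ) * (g θ - c)) := by
    intro θ
    rw [show ν * g θ = μ * g θ + (ν - μ) * g θ by ring, exp_add]
    ring
  obtain ⟨z, hz, hzc⟩ : ∃ z ∈ Icc a b, g z ≠ c := by
    by_cases hxc : g x = c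
    · exact ⟨y, hy, fun h ↦ hxy (hxc.trans h.symm)⟩
    · exact ⟨x, hx, hxc⟩
  have hpos : 0 < ∫ θ in a..b,
      exp (μ * g θ) * ((g θ - c) * (exp ((ν - μ) * g θ) - exp ((ν - μ) * c))) :=
    integral_pos hab (by fun_prop)
      (fun θ _ ↦ mul_nonneg (exp_pos _).le (hexp.sub_mul_sub_nonneg _ _))
      ⟨z, hz, mul_pos (exp_pos _) (hexp.sub_mul_sub_pos hzc)⟩
  have hν : 0 < (tiltedMean g a b ν - c) * ∫ θ in a..b, exp (ν * g θ) := by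
    rw [← integral_exp_mul_mul_sub hab hg]
    simp_rw [hsplit]
    rwa [integral_add, integral_const_mul, hμ, mul_zero, add_zero]
    all_goals apply Continuous.intervalIntegrable; fun_prop
  exact sub_pos.1 (pos_of_mul_pos_left hν (integral_exp_mul_pos hab hg ν).le)

lemma tiltedMean_le (hab : a < b) (hg : Continuous g) {M : ℝ} (hM : ∀ θ ∈ Icc a b, g θ ≤ M)
    (μ : ℝ) : tiltedMean g a b μ ≤ M := by
  have hneg : (tiltedMean g a b μ - M) * ∫ θ in a..b, exp (μ * g θ) ≤ 0 := by
    rw [← integral_exp_mul_mul_sub hab hg, ← neg_nonneg, ← intervalIntegral.integral_neg]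
    refine intervalIntegral.integral_nonneg hab.le fun θ hθ ↦ ?_
    nlinarith [exp_pos (μ * g θ), hM θ hθ]
  nlinarith [integral_exp_mul_pos hab hg μ]

lemma mul_integral_max_mul_exp_le (hab : a ≤ b) (hg : Continuous g) (μ s : ℝ) :
    μ * (∫ θ in a..b, max (g θ - s) 0) * exp (μ * s) ≤ ∫ θ in a..b, exp (μ * g θ) := by
  rw [← integral_const_mul, ← integral_mul_const]
  refine integral_mono_on hab (by apply Continuous.intervalIntegrable; fun_prop)
    (by apply Continuous.intervalIntegrable; fun_prop) fun θ _ ↦ ?_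
  rcases le_total (g θ - s) 0 with h | h
  · rw [max_eq_right h, mul_zero, zero_mul]
    exact (exp_pos _).le
  · rw [max_eq_left h]
    calc μ * (g θ - s) * exp (μ * s) ≤ exp (μ * (g θ - s)) * exp (μ * s) := by
          gcongr; linarith [add_one_le_exp (μ * (g θ - s))]
      _ = exp (μ * g θ) := by rw [← exp_add]; ring_nf

lemma mul_sub_tiltedMean_mul_le (hab : a < b) (hg : Continuous g) (μ s : ℝ) :
    μ * ((s - tiltedMean g a b μ) * ∫ θ in a..b, exp (μ * g θ)) ≤ (b - a) * exp (μ * s) := by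
  have hle : 0 ≤ ∫ θ in a..b, exp (μ * s) + μ * (exp (μ * g θ) * (g θ - s)) := by
    refine intervalIntegral.integral_nonneg hab.le fun θ _ ↦ ?_
    have : μ * (s - g θ) * exp (μ * g θ) ≤ exp (μ * (s - g θ)) * exp (μ * g θ) := by
      gcongr; linarith [add_one_le_exp (μ * (s - g θ))]
    rw [← exp_add] at this
    ring_nf at this ⊢
    linarith
  rw [integral_add intervalIntegrable_const (by apply Continuous.intervalIntegrable; fun_prop),
    integral_const_mul, integral_exp_mul_mul_sub hab hg, intervalIntegral.integral_const,
    smul_eq_mul] at hle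
  linarith

lemma sub_tiltedMean_le (hab : a < b) (hg : Continuous g) {θ₀ : ℝ} (h₀ : θ₀ ∈ Icc a b)
    {η : ℝ} (hη : 0 < η) : ∃ C, ∀ μ > 0, g θ₀ - tiltedMean g a b μ ≤ η + C / μ ^ 2 := by
  set s := g θ₀ - η
  set κ := ∫ θ in a..b, max (g θ - s) 0
  have hκ : 0 < κ :=
    integral_pos hab (by fun_prop) (fun θ _ ↦ le_max_right _ _) ⟨θ₀, h₀, by simp [s, hη]⟩
  refine ⟨(b - a) / κ, fun μ hμ ↦ ?_⟩
  set F := ∫ θ in a..b, exp (μ * g θ)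
  set d := s - tiltedMean g a b μ
  have hF : μ * κ * exp (μ * s) ≤ F := mul_integral_max_mul_exp_le hab.le hg μ s
  have hN : μ * (d * F) ≤ (b - a) * exp (μ * s) := mul_sub_tiltedMean_mul_le hab hg μ s
  suffices d ≤ (b - a) / κ / μ ^ 2 by linarith
  rw [le_div_iff₀ (by positivity), le_div_iff₀ hκ]
  rcases le_or_gt d 0 with hd | hd
  · nlinarith [mul_nonpos_of_nonpos_of_nonneg hd (by positivity : 0 ≤ μ ^ 2 * κ)]
  refine le_of_mul_le_mul_right ?_ (exp_pos (μ * s))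
  calc d * μ ^ 2 * κ * exp (μ * s) = d * μ * (μ * κ * exp (μ * s)) := by ring
    _ ≤ d * μ * F := by gcongr
    _ ≤ (b - a) * exp (μ * s) := by linarith

theorem tendsto_tiltedMean_atTop (hab : a < b) (hg : Continuous g) {θ₀ : ℝ}
    (h₀ : θ₀ ∈ Icc a b) (hmax : IsMaxOn g (Icc a b) θ₀) :
    Tendsto (tiltedMean g a b) atTop (nhds (g θ₀)) := by
  refine tendsto_order.2 ⟨fun y hy ↦ ?_, fun y hy ↦
    Eventually.of_forall fun μ ↦ (tiltedMean_le hab hg (fun θ hθ ↦ hmax hθ) μ).trans_lt hy⟩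
  obtain ⟨C, hC⟩ := sub_tiltedMean_le hab hg h₀ (half_pos (sub_pos.2 hy))
  have hdecay : Tendsto (fun μ : ℝ ↦ C / μ ^ 2) atTop (nhds 0) :=
    tendsto_const_nhds.div_atTop (tendsto_pow_atTop two_ne_zero)
  filter_upwards [hdecay.eventually (gt_mem_nhds (half_pos (sub_pos.2 hy))),
    eventually_gt_atTop 0] with μ hsmall hμ
  linarith [hC μ hμ]

end TiltedMean

lemma besselI_one_div_besselI_zero :
    (fun μ ↦ besselI 1 μ / besselI 0 μ) = tiltedMean cos 0 (2 * π) := by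
  ext μ
  simp only [besselI, tiltedMean, Int.cast_one, one_mul, Int.cast_zero, zero_mul, cos_zero,
    mul_one]
  exact mul_div_mul_left _ _ (by positivity)

/-- The function `μ ↦ I₁(μ)/I₀(μ)` is strictly increasing on `ℝ` and tends to `1`
as `μ → +∞`. -/
theorem besselI_ratio_strictMono_tendsto_one :
    StrictMono (fun μ : ℝ => besselI 1 μ / besselI 0 μ) ∧
    Tendsto (fun μ : ℝ => besselI 1 μ / besselI 0 μ) atTop (nhds 1) := by
  have h2π : (0 : ℝ) < 2 * π := two_pi_pos
  have h₀ : (0 : ℝ) ∈ Icc 0 (2 * π) := ⟨le_rfl, h2π.le⟩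
  have hπ : π ∈ Icc 0 (2 * π) := ⟨pi_pos.le, by linarith [pi_pos]⟩
  rw [besselI_one_div_besselI_zero]
  refine ⟨tiltedMean_strictMono h2π continuous_cos h₀ hπ (by norm_num), ?_⟩
  simpa using tendsto_tiltedMean_atTop h2π continuous_cos h₀ fun θ _ ↦ by simpa using cos_le_one θ
end

section
/- The function q(μ) = I₁(μ)/(2 I₀(μ)) is a bijection from ℝ onto the open interval (−1/2, 1/2); that is, for every q ∈ (−1/2, 1/2) there exists a unique μ ∈ ℝ with I₁(μ)/(2 I₀(μ)) = q. (This is the existence and uniqueness of the two-dimensional Bingham closure in eigenvalue form.) -/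
/-
With `Z(μ) = ∫₀^{2π} e^{μ cos θ} dθ`, the ratio `r = I₁/I₀ = Z'/Z` is the mean of `cos θ` under the
von Mises density `e^{μ cos θ}/Z(μ)`. Its derivative is the variance of `cos θ`, so `r` is strictly
increasing; `|cos θ| ≤ 1`, strictly away from finitely many points, gives `|r| < 1`; and `r` is odd
by the shift `θ ↦ θ + π`. Finally `log Z` is convex with derivative `r`, and comparing
`log Z(μ) - log Z(0) ≤ μ r(μ)` with `Z(μ) ≥ δ e^{μ cos δ}` shows that `r(μ)` comes arbitrarily
close to `1`, so by the intermediate value theorem `r` maps `ℝ` onto `(-1, 1)`.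
-/

open Real Filter

open MeasureTheory intervalIntegral Set Topology

noncomputable def vonMisesIntegral (f : ℝ → ℝ) (μ : ℝ) : ℝ :=
  ∫ θ in (0:ℝ)..(2 * π), exp (μ * cos θ) * f θ

noncomputable def meanCos (μ : ℝ) : ℝ :=
  vonMisesIntegral cos μ / vonMisesIntegral 1 μ

theorem exp_mul_cos_le_exp_abs (x θ : ℝ) : exp (x * cos θ) ≤ exp |x| := by
  refine exp_le_exp.2 ((le_abs_self _).trans ?_)
  rw [abs_mul]
  exact mul_le_of_le_one_right (abs_nonneg x) (abs_cos_le_one θ)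

theorem hasDerivAt_vonMisesIntegral {f : ℝ → ℝ} (hf : Continuous f) (μ₀ : ℝ) :
    HasDerivAt (vonMisesIntegral f) (vonMisesIntegral (fun θ => cos θ * f θ) μ₀) μ₀ := by
  have hF : ∀ μ, Continuous fun θ => exp (μ * cos θ) * f θ := fun μ => by fun_prop
  refine (hasDerivAt_integral_of_dominated_loc_of_deriv_le (a := 0) (b := 2 * π)
    (F' := fun μ θ => exp (μ * cos θ) * (cos θ * f θ))
    (bound := fun θ => exp (|μ₀| + 1) * |f θ|) (Metric.ball_mem_nhds μ₀ one_pos)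
    (Eventually.of_forall fun μ => (hF μ).aestronglyMeasurable)
    ((hF μ₀).intervalIntegrable _ _) (by fun_prop : Continuous _).aestronglyMeasurable
    (ae_of_all _ fun θ _ μ hμ => ?_) ((by fun_prop : Continuous _).intervalIntegrable _ _)
    (ae_of_all _ fun θ _ μ _ => ?_)).2
  · have hμ : |μ| ≤ |μ₀| + 1 := by
      have := abs_sub_abs_le_abs_sub μ μ₀
      rw [Metric.mem_ball, Real.dist_eq] at hμ
      linarith
    rw [norm_mul, norm_mul, Real.norm_eq_abs, Real.norm_eq_abs, abs_exp]
    calc exp (μ * cos θ) * (|cos θ| * |f θ|) ≤ exp (|μ₀| + 1) * (1 * |f θ|) :=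
          mul_le_mul ((exp_mul_cos_le_exp_abs μ θ).trans (exp_le_exp.2 hμ))
            (mul_le_mul_of_nonneg_right (abs_cos_le_one θ) (abs_nonneg _)) (by positivity)
            (by positivity)
      _ = exp (|μ₀| + 1) * |f θ| := by rw [one_mul]
  · simpa [mul_comm, mul_assoc, mul_left_comm] using
      (((hasDerivAt_id μ).mul_const (cos θ)).exp).mul_const (f θ)

theorem vonMisesIntegral_lt_vonMisesIntegral {f g : ℝ → ℝ} (hf : Continuous f)
    (hg : Continuous g) (hle : ∀ θ, f θ ≤ g θ) {θ₀ : ℝ} (hθ₀ : θ₀ ∈ Icc 0 (2 * π))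
    (hlt : f θ₀ < g θ₀) (μ : ℝ) :
    vonMisesIntegral f μ < vonMisesIntegral g μ :=
  integral_lt_integral_of_continuousOn_of_le_of_exists_lt two_pi_pos
    (by fun_prop) (by fun_prop)
    (fun θ _ => mul_le_mul_of_nonneg_left (hle θ) (exp_pos _).le)
    ⟨θ₀, hθ₀, mul_lt_mul_of_pos_left hlt (exp_pos _)⟩

theorem vonMisesIntegral_one_pos (μ : ℝ) : 0 < vonMisesIntegral 1 μ :=
  intervalIntegral_pos_of_pos ((by fun_prop : Continuous _).intervalIntegrable _ _)
    (fun θ => by simp [exp_pos]) two_pi_pos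

theorem vonMisesIntegral_neg {f : ℝ → ℝ} (hf : Function.Periodic f (2 * π)) (μ : ℝ) :
    vonMisesIntegral f (-μ) = vonMisesIntegral (fun θ => f (θ + π)) μ := by
  set F := fun θ => exp (-μ * cos θ) * f θ
  have hF : Function.Periodic F (2 * π) := fun θ => by simp only [F, cos_add_two_pi, hf θ]
  calc vonMisesIntegral f (-μ) = ∫ θ in (0:ℝ)..0 + 2 * π, F θ := by rw [zero_add]; rfl
    _ = ∫ θ in π..π + 2 * π, F θ := hF.intervalIntegral_add_eq 0 π
    _ = ∫ θ in (0:ℝ)..2 * π, F (θ + π) := by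
        rw [integral_comp_add_right, zero_add, add_comm]
    _ = vonMisesIntegral (fun θ => f (θ + π)) μ := by
        simp only [F, vonMisesIntegral, cos_add_pi, neg_mul_neg]

theorem meanCos_neg (μ : ℝ) : meanCos (-μ) = -meanCos μ := by
  have hZ : vonMisesIntegral 1 (-μ) = vonMisesIntegral 1 μ :=
    vonMisesIntegral_neg (fun _ => rfl) μ
  have hG : vonMisesIntegral cos (-μ) = -vonMisesIntegral cos μ := by
    rw [vonMisesIntegral_neg cos_periodic, vonMisesIntegral, vonMisesIntegral,
      ← intervalIntegral.integral_neg]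
    simp only [cos_add_pi, mul_neg]
  rw [meanCos, meanCos, hZ, hG, neg_div]

theorem meanCos_lt_one (μ : ℝ) : meanCos μ < 1 :=
  (div_lt_one (vonMisesIntegral_one_pos μ)).2 <|
    vonMisesIntegral_lt_vonMisesIntegral continuous_cos continuous_const cos_le_one
      ⟨pi_pos.le, by linarith [pi_pos]⟩ (by norm_num) μ

theorem meanCos_mem_Ioo (μ : ℝ) : meanCos μ ∈ Ioo (-1) 1 :=
  ⟨by linarith [meanCos_lt_one (-μ), meanCos_neg μ], meanCos_lt_one μ⟩

theorem vonMisesIntegral_sq_sub_cos (m μ : ℝ) :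
    vonMisesIntegral (fun θ => (cos θ - m) ^ 2) μ = vonMisesIntegral (fun θ => cos θ * cos θ) μ
      - 2 * m * vonMisesIntegral cos μ + m ^ 2 * vonMisesIntegral 1 μ := by
  have hi : ∀ g : ℝ → ℝ, Continuous g → IntervalIntegrable (fun θ => exp (μ * cos θ) * g θ)
      volume 0 (2 * π) := fun g hg => (by fun_prop : Continuous _).intervalIntegrable _ _
  rw [vonMisesIntegral, vonMisesIntegral, vonMisesIntegral, vonMisesIntegral,
    ← intervalIntegral.integral_const_mul, ← intervalIntegral.integral_const_mul,
    ← intervalIntegral.integral_sub (hi _ (by fun_prop)) ((hi _ continuous_cos).const_mul _),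
    ← intervalIntegral.integral_add
      ((hi _ (by fun_prop)).sub ((hi _ continuous_cos).const_mul _))
      ((hi 1 continuous_const).const_mul _)]
  congr 1 with θ
  simp only [Pi.one_apply]
  ring

theorem vonMisesIntegral_sq_sub_cos_pos (m μ : ℝ) :
    0 < vonMisesIntegral (fun θ => (cos θ - m) ^ 2) μ := by
  obtain ⟨θ₀, hθ₀, hne⟩ : ∃ θ₀ ∈ Icc 0 (2 * π), cos θ₀ ≠ m := by
    by_cases h : m = 0
    · exact ⟨π, ⟨pi_pos.le, by linarith [pi_pos]⟩, by simp [h]⟩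
    · exact ⟨π / 2, ⟨by positivity, by linarith [pi_pos]⟩, by simpa [eq_comm] using h⟩
  have h := vonMisesIntegral_lt_vonMisesIntegral continuous_const (by fun_prop)
    (fun θ => sq_nonneg (cos θ - m)) hθ₀ (by positivity) μ
  rwa [show vonMisesIntegral (fun _ => 0) μ = 0 by simp [vonMisesIntegral]] at h

theorem sq_vonMisesIntegral_cos_lt (μ : ℝ) :
    vonMisesIntegral cos μ ^ 2
      < vonMisesIntegral 1 μ * vonMisesIntegral (fun θ => cos θ * cos θ) μ := by
  have hZ := vonMisesIntegral_one_pos μ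
  have hvar :=
    vonMisesIntegral_sq_sub_cos_pos (vonMisesIntegral cos μ / vonMisesIntegral 1 μ) μ
  rw [vonMisesIntegral_sq_sub_cos] at hvar
  generalize vonMisesIntegral 1 μ = Z at *
  generalize vonMisesIntegral cos μ = G at *
  generalize vonMisesIntegral (fun θ => cos θ * cos θ) μ = H at *
  have : H - 2 * (G / Z) * G + (G / Z) ^ 2 * Z = (Z * H - G ^ 2) / Z := by
    field_simp
    ring
  rw [this, div_pos_iff_of_pos_right hZ] at hvar
  linarith

theorem hasDerivAt_vonMisesIntegral_one (μ : ℝ) :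
    HasDerivAt (vonMisesIntegral 1) (vonMisesIntegral cos μ) μ := by
  simpa using hasDerivAt_vonMisesIntegral (f := 1) continuous_one μ

theorem hasDerivAt_meanCos (μ : ℝ) :
    HasDerivAt meanCos ((vonMisesIntegral (fun θ => cos θ * cos θ) μ * vonMisesIntegral 1 μ
      - vonMisesIntegral cos μ * vonMisesIntegral cos μ) / vonMisesIntegral 1 μ ^ 2) μ :=
  (hasDerivAt_vonMisesIntegral continuous_cos μ).div (hasDerivAt_vonMisesIntegral_one μ)
    (vonMisesIntegral_one_pos μ).ne'

theorem strictMono_meanCos : StrictMono meanCos :=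
  strictMono_of_hasDerivAt_pos hasDerivAt_meanCos fun μ => by
    have := sq_vonMisesIntegral_cos_lt μ
    have := vonMisesIntegral_one_pos μ
    apply div_pos <;> nlinarith

theorem continuous_meanCos : Continuous meanCos :=
  continuous_iff_continuousAt.2 fun μ => (hasDerivAt_meanCos μ).continuousAt

theorem log_vonMisesIntegral_one_sub_le {μ : ℝ} (hμ : 0 ≤ μ) :
    log (vonMisesIntegral 1 μ) - log (vonMisesIntegral 1 0) ≤ μ * meanCos μ := by
  have hlog : ∀ t, HasDerivAt (fun t => log (vonMisesIntegral 1 t)) (meanCos t) t := fun t =>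
    (hasDerivAt_vonMisesIntegral_one t).log (vonMisesIntegral_one_pos t).ne'
  rw [← integral_eq_sub_of_hasDerivAt (fun t _ => hlog t)
    (continuous_meanCos.intervalIntegrable _ _)]
  simpa using integral_mono_on (μ := volume) hμ (continuous_meanCos.intervalIntegrable _ _)
    intervalIntegrable_const fun t ht => strictMono_meanCos.monotone ht.2

theorem mul_exp_mul_cos_le_vonMisesIntegral_one {μ δ : ℝ} (hμ : 0 ≤ μ) (hδ₀ : 0 ≤ δ)
    (hδπ : δ ≤ π) : δ * exp (μ * cos δ) ≤ vonMisesIntegral 1 μ := by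
  have hi : ∀ a b : ℝ, IntervalIntegrable (fun θ => exp (μ * cos θ)) volume a b :=
    fun a b => (by fun_prop : Continuous _).intervalIntegrable a b
  calc δ * exp (μ * cos δ) = ∫ _ in (0:ℝ)..δ, exp (μ * cos δ) := by simp
    _ ≤ ∫ θ in (0:ℝ)..δ, exp (μ * cos θ) :=
        integral_mono_on hδ₀ intervalIntegrable_const (hi _ _) fun θ hθ =>
          exp_le_exp.2 (mul_le_mul_of_nonneg_left (cos_le_cos_of_nonneg_of_le_pi hθ.1 hδπ hθ.2) hμ)
    _ ≤ ∫ θ in (0:ℝ)..2 * π, exp (μ * cos θ) :=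
        integral_mono_interval le_rfl hδ₀ (by linarith [pi_pos])
          (ae_of_all _ fun θ => (exp_pos _).le) (hi _ _)
    _ = vonMisesIntegral 1 μ := by simp [vonMisesIntegral]

theorem exists_lt_meanCos {c : ℝ} (hc : c < 1) : ∃ μ, c < meanCos μ := by
  obtain ⟨δ, ⟨hδ₀, hδπ⟩, hcδ⟩ : ∃ δ ∈ Ioo 0 π, c < cos δ := by
    have hcos : ∀ᶠ δ in 𝓝[>] 0, c < cos δ :=
      (continuous_cos.tendsto' 0 1 cos_zero).mono_left nhdsWithin_le_nhds |>.eventually_const_lt hc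
    exact ((show ∀ᶠ δ in 𝓝[>] (0:ℝ), δ ∈ Ioo 0 π from Ioo_mem_nhdsGT pi_pos).and hcos).exists
  -- for `μ > 0`, `log δ + μ cos δ ≤ log Z(μ) ≤ log Z(0) + μ r(μ)` gives `cos δ - K / μ ≤ r(μ)`
  set K := log (vonMisesIntegral 1 0) - log δ
  have hK : Tendsto (fun μ => cos δ - K / μ) atTop (𝓝 (cos δ)) := by
    simpa using (tendsto_const_nhds (x := cos δ)).sub
      ((tendsto_const_nhds (x := K)).div_atTop tendsto_id)
  obtain ⟨μ, hμ₀, hμ⟩ := ((eventually_gt_atTop 0).and (hK.eventually_const_lt hcδ)).exists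
  refine ⟨μ, hμ.trans_le ?_⟩
  have hlow : log δ + μ * cos δ ≤ log (vonMisesIntegral 1 μ) := by
    have := log_le_log (by positivity)
      (mul_exp_mul_cos_le_vonMisesIntegral_one hμ₀.le hδ₀.le hδπ.le)
    rwa [log_mul hδ₀.ne' (exp_pos _).ne', log_exp] at this
  have hup := log_vonMisesIntegral_one_sub_le hμ₀.le
  rw [sub_le_iff_le_add, ← sub_le_iff_le_add', le_div_iff₀ hμ₀]
  linarith

theorem range_meanCos : range meanCos = Ioo (-1) 1 := by
  refine (range_subset_iff.2 meanCos_mem_Ioo).antisymm fun x hx => ?_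
  obtain ⟨μ₁, hμ₁⟩ := exists_lt_meanCos hx.2
  obtain ⟨μ₂, hμ₂⟩ := exists_lt_meanCos (neg_lt.1 hx.1)
  exact mem_range_of_exists_le_of_exists_ge continuous_meanCos
    ⟨-μ₂, by linarith [meanCos_neg μ₂]⟩ ⟨μ₁, hμ₁.le⟩

theorem besselI_one_div_two_mul_besselI_zero (μ : ℝ) :
    besselI 1 μ / (2 * besselI 0 μ) = meanCos μ / 2 := by
  have hZ := (vonMisesIntegral_one_pos μ).ne'
  simp only [besselI, meanCos, vonMisesIntegral, Int.cast_one, Int.cast_zero, one_mul, zero_mul,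
    cos_zero, Pi.one_apply] at hZ ⊢
  field_simp

/-- The function `q(μ) = I₁(μ)/(2 I₀(μ))` is a bijection from `ℝ` onto `(-1/2, 1/2)`:
it takes values in `(-1/2, 1/2)`, and every `q` in that interval is attained by a
unique `μ ∈ ℝ`. (Existence and uniqueness of the 2D Bingham closure.) -/
theorem bingham_closure_2d_bijective :
    (∀ μ : ℝ, besselI 1 μ / (2 * besselI 0 μ) ∈ Set.Ioo (-(1/2) : ℝ) (1/2)) ∧
    (∀ q ∈ Set.Ioo (-(1/2) : ℝ) (1/2), ∃! μ : ℝ, besselI 1 μ / (2 * besselI 0 μ) = q) := by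
  simp only [besselI_one_div_two_mul_besselI_zero]
  refine ⟨fun μ => ?_, fun q hq => ?_⟩
  · obtain ⟨h₁, h₂⟩ := meanCos_mem_Ioo μ
    constructor <;> linarith
  · obtain ⟨μ, hμ⟩ : 2 * q ∈ range meanCos := by
      rw [range_meanCos]
      constructor <;> linarith [hq.1, hq.2]
    refine ⟨μ, by linarith, fun ν hν => strictMono_meanCos.injective ?_⟩
    linarith
end

section
/- There exists a constant C > 0 such that for all μ ∈ ℝ, |2μ + I₀(μ)/(I₀(μ)+I₁(μ)) − I₀(μ)/(I₀(μ)−I₁(μ))| ≤ C. (This quantity is the derivative with respect to q of the correction term ΔS = S − Ŝ in the two-dimensional entropy decomposition, expressed in the variable μ; its uniform boundedness is the content of Proposition 2.2.) -/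
/-!
Write `⟨g⟩ = (2π)⁻¹ ∫₀^{2π} e^{μ cos θ} g(cos θ) dθ` (this is `expCosMean μ g`), so that
`I₀ = ⟨1⟩`, `I₁ = ⟨c⟩` and `I₀ - I₁ = ⟨1 - c⟩`. Integrating `d/dθ (e^{μ cos θ} sin θ g(cos θ))`
over a period gives the Stein identity `⟨c g - (1 - c²) g'⟩ = μ ⟨(1 - c²) g⟩`. With `g = 1` it
yields `I₁ = 2μ⟨1 - c⟩ - μ⟨(1 - c)²⟩`, so the quantity equals
`I₀/(I₀ + I₁) - 1 + μ⟨(1 - c)²⟩/⟨1 - c⟩`. It is odd in `μ`, and for `μ ≥ 0` the first fraction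
lies in `[0, 1]`. With `g = 1 - c` the identity bounds `μ⟨(1 - c)²(1 + c)⟩` by `3⟨1 - c⟩`; the
rest, `μ⟨(1 - c)²(-c)⟩`, only sees `cos θ < 0`, where the weight is at most `1`, so it is
`O(μ)`, negligible against `⟨1 - c⟩ ≥ e^{μ/2}/96`.
-/

open Real Filter

open intervalIntegral MeasureTheory Set

noncomputable def expCosMean (μ : ℝ) (g : ℝ → ℝ) : ℝ :=
  1 / (2 * π) * ∫ θ in (0:ℝ)..2 * π, exp (μ * cos θ) * g (cos θ)

section ExpCosMean

variable {μ : ℝ} {g h : ℝ → ℝ}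

theorem intervalIntegrable_exp_mul_cos_mul_comp_cos (hg : Continuous g) (a b : ℝ) :
    IntervalIntegrable (fun θ => exp (μ * cos θ) * g (cos θ)) volume a b :=
  (by fun_prop : Continuous fun θ => exp (μ * cos θ) * g (cos θ)).intervalIntegrable a b

theorem expCosMean_add (hg : Continuous g) (hh : Continuous h) :
    expCosMean μ (fun c => g c + h c) = expCosMean μ g + expCosMean μ h := by
  simp only [expCosMean, mul_add]
  rw [integral_add (intervalIntegrable_exp_mul_cos_mul_comp_cos hg _ _)
    (intervalIntegrable_exp_mul_cos_mul_comp_cos hh _ _), mul_add]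

theorem expCosMean_sub (hg : Continuous g) (hh : Continuous h) :
    expCosMean μ (fun c => g c - h c) = expCosMean μ g - expCosMean μ h := by
  simp only [expCosMean, mul_sub]
  rw [integral_sub (intervalIntegrable_exp_mul_cos_mul_comp_cos hg _ _)
    (intervalIntegrable_exp_mul_cos_mul_comp_cos hh _ _), mul_sub]

theorem expCosMean_const_mul (a : ℝ) :
    expCosMean μ (fun c => a * g c) = a * expCosMean μ g := by
  simp only [expCosMean, mul_left_comm _ a, intervalIntegral.integral_const_mul]

theorem expCosMean_nonneg (hg : ∀ c ∈ Icc (-1) 1, 0 ≤ g c) : 0 ≤ expCosMean μ g := by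
  refine mul_nonneg (by positivity) (integral_nonneg (by positivity) fun θ _ => ?_)
  exact mul_nonneg (exp_pos _).le (hg _ ⟨neg_one_le_cos θ, cos_le_one θ⟩)

theorem expCosMean_mono (hg : Continuous g) (hh : Continuous h)
    (hgh : ∀ c ∈ Icc (-1) 1, g c ≤ h c) : expCosMean μ g ≤ expCosMean μ h := by
  rw [← sub_nonneg, ← expCosMean_sub hh hg]
  exact expCosMean_nonneg fun c hc => sub_nonneg.2 (hgh c hc)

theorem expCosMean_le_of_forall_le {b : ℝ} (hg : Continuous g)
    (hb : ∀ c ∈ Icc (-1) 1, exp (μ * c) * g c ≤ b) : expCosMean μ g ≤ b := by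
  have hint : ∫ θ in (0:ℝ)..2 * π, exp (μ * cos θ) * g (cos θ) ≤ ∫ _ in (0:ℝ)..2 * π, b :=
    integral_mono_on (by positivity) (intervalIntegrable_exp_mul_cos_mul_comp_cos hg _ _)
      intervalIntegrable_const fun θ _ => hb _ ⟨neg_one_le_cos θ, cos_le_one θ⟩
  rw [intervalIntegral.integral_const, smul_eq_mul] at hint
  rw [expCosMean]
  calc 1 / (2 * π) * ∫ θ in (0:ℝ)..2 * π, exp (μ * cos θ) * g (cos θ)
      ≤ 1 / (2 * π) * ((2 * π - 0) * b) := by gcongr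
    _ = b := by field_simp; ring

/-- Shifting `θ` by `π` turns `cos θ` into `-cos θ`. -/
theorem expCosMean_neg :
    expCosMean (-μ) g = expCosMean μ (fun c => g (-c)) := by
  have hper : Function.Periodic (fun θ => exp (-μ * cos θ) * g (cos θ)) (2 * π) := by
    intro θ; simp only [cos_add_two_pi]
  have hshift := integral_comp_add_right (a := 0) (b := 2 * π)
    (fun θ => exp (-μ * cos θ) * g (cos θ)) π
  rw [zero_add, add_comm (2 * π), ← hper.intervalIntegral_add_eq 0 π, zero_add] at hshift
  simp only [cos_add_pi, neg_mul_neg] at hshift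
  rw [expCosMean, expCosMean, hshift]

/-- Integration by parts against `θ ↦ exp (μ cos θ) sin θ g (cos θ)`, which vanishes at `0` and
`2π`: a Stein identity for the von Mises weight. -/
theorem expCosMean_stein {g' : ℝ → ℝ} (hg : ∀ c, HasDerivAt g (g' c) c) (hg' : Continuous g') :
    expCosMean μ (fun c => c * g c - (1 - c ^ 2) * g' c)
      = μ * expCosMean μ (fun c => (1 - c ^ 2) * g c) := by
  have hgc : Continuous g := continuous_iff_continuousAt.2 fun c => (hg c).continuousAt
  have hderiv : ∀ θ ∈ uIcc (0:ℝ) (2 * π),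
      HasDerivAt (fun θ => exp (μ * cos θ) * sin θ * g (cos θ))
        (exp (μ * cos θ) * ((cos θ * g (cos θ) - (1 - cos θ ^ 2) * g' (cos θ))
          - μ * ((1 - cos θ ^ 2) * g (cos θ)))) θ := by
    intro θ _
    have := ((((hasDerivAt_cos θ).const_mul μ).exp).mul (hasDerivAt_sin θ)).mul
      ((hg (cos θ)).comp θ (hasDerivAt_cos θ))
    refine this.congr_deriv ?_
    simp only [Function.comp_apply, Pi.mul_apply, ← sin_sq]
    ring
  have hzero := integral_eq_sub_of_hasDerivAt hderiv
    (intervalIntegrable_exp_mul_cos_mul_comp_cos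
      (g := fun c => (c * g c - (1 - c ^ 2) * g' c) - μ * ((1 - c ^ 2) * g c)) (by fun_prop) _ _)
  simp only [sin_two_pi, sin_zero, mul_zero, zero_mul, sub_zero] at hzero
  have hmean : expCosMean μ (fun c => (c * g c - (1 - c ^ 2) * g' c)
      - μ * ((1 - c ^ 2) * g c)) = 0 := by
    rw [expCosMean, hzero, mul_zero]
  rwa [expCosMean_sub (by fun_prop) (by fun_prop), expCosMean_const_mul, sub_eq_zero] at hmean

end ExpCosMean

theorem besselI_zero_eq (μ : ℝ) : besselI 0 μ = expCosMean μ (fun _ => 1) := by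
  simp [besselI, expCosMean]

theorem besselI_one_eq (μ : ℝ) : besselI 1 μ = expCosMean μ (fun c => c) := by
  simp [besselI, expCosMean]

theorem besselI_zero_neg (μ : ℝ) : besselI 0 (-μ) = besselI 0 μ := by
  rw [besselI_zero_eq, besselI_zero_eq, expCosMean_neg]

theorem besselI_one_neg (μ : ℝ) : besselI 1 (-μ) = -besselI 1 μ := by
  rw [besselI_one_eq, besselI_one_eq, expCosMean_neg, ← neg_one_mul, ← expCosMean_const_mul]
  simp only [neg_one_mul]

theorem besselI_zero_sub_besselI_one (μ : ℝ) :
    besselI 0 μ - besselI 1 μ = expCosMean μ (fun c => 1 - c) := by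
  rw [besselI_zero_eq, besselI_one_eq, expCosMean_sub (by fun_prop) (by fun_prop)]

theorem besselI_one_eq_mul_expCosMean (μ : ℝ) :
    besselI 1 μ = μ * expCosMean μ (fun c => 1 - c ^ 2) := by
  have hstein :=
    expCosMean_stein (μ := μ) (fun c => hasDerivAt_const c (1 : ℝ)) continuous_const
  simp only [mul_one, mul_zero, sub_zero] at hstein
  rw [besselI_one_eq, hstein]

theorem besselI_one_eq_mul_sub (μ : ℝ) :
    besselI 1 μ
      = μ * (2 * expCosMean μ (fun c => 1 - c) - expCosMean μ (fun c => (1 - c) ^ 2)) := by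
  rw [besselI_one_eq_mul_expCosMean, ← expCosMean_const_mul (a := 2),
    ← expCosMean_sub (by fun_prop) (by fun_prop)]
  congr 2 with c
  ring

theorem exp_half_div_le_expCosMean_one_sub {μ : ℝ} (hμ : 0 ≤ μ) :
    exp (μ / 2) / 96 ≤ expCosMean μ (fun c => 1 - c) := by
  have hcos_pi_div_six : cos (π / 6) ≤ 7 / 8 := by
    rw [cos_pi_div_six]
    nlinarith [sq_sqrt (show (0:ℝ) ≤ 3 by norm_num), sqrt_nonneg 3]
  have hbound :
      ∀ θ ∈ Icc (π / 6) (π / 3), exp (μ / 2) / 8 ≤ exp (μ * cos θ) * (1 - cos θ) := by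
    rintro θ ⟨hθ₁, hθ₂⟩
    have hcos_ge : 1 / 2 ≤ cos θ := by
      rw [← cos_pi_div_three]
      exact cos_le_cos_of_nonneg_of_le_pi (by linarith [pi_pos]) (by linarith [pi_pos]) hθ₂
    have hcos_le : cos θ ≤ 7 / 8 := by
      exact (cos_le_cos_of_nonneg_of_le_pi (by positivity) (by linarith [pi_pos]) hθ₁).trans
        hcos_pi_div_six
    have hexp : exp (μ / 2) ≤ exp (μ * cos θ) := exp_le_exp.2 (by nlinarith)
    nlinarith [exp_pos (μ / 2)]
  have hpiece : (π / 3 - π / 6) * (exp (μ / 2) / 8)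
      ≤ ∫ θ in (π / 6)..(π / 3), exp (μ * cos θ) * (1 - cos θ) := by
    rw [← smul_eq_mul, ← intervalIntegral.integral_const]
    exact integral_mono_on (by linarith [pi_pos]) intervalIntegrable_const
      (intervalIntegrable_exp_mul_cos_mul_comp_cos (g := fun c => 1 - c) (by fun_prop) _ _)
      hbound
  have hsub : ∫ θ in (π / 6)..(π / 3), exp (μ * cos θ) * (1 - cos θ)
      ≤ ∫ θ in (0:ℝ)..2 * π, exp (μ * cos θ) * (1 - cos θ) :=
    integral_mono_interval (by positivity) (by linarith [pi_pos]) (by linarith [pi_pos])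
      (Eventually.of_forall fun θ => mul_nonneg (exp_pos _).le (by linarith [cos_le_one θ]))
      (intervalIntegrable_exp_mul_cos_mul_comp_cos (g := fun c => 1 - c) (by fun_prop) _ _)
  rw [expCosMean]
  calc exp (μ / 2) / 96 = 1 / (2 * π) * ((π / 3 - π / 6) * (exp (μ / 2) / 8)) := by
        field_simp; ring
    _ ≤ _ := by gcongr; exact hpiece.trans hsub

theorem mul_expCosMean_sq_le {μ : ℝ} (hμ : 0 ≤ μ) :
    μ * expCosMean μ (fun c => (1 - c) ^ 2) ≤ 771 * expCosMean μ (fun c => 1 - c) := by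
  have hstein := expCosMean_stein (μ := μ) (g := fun c => 1 - c)
    (fun c => (hasDerivAt_id c).const_sub 1) continuous_const
  have hsplit : expCosMean μ (fun c => (1 - c) ^ 2)
      = expCosMean μ (fun c => (1 - c ^ 2) * (1 - c))
        + expCosMean μ (fun c => (1 - c) ^ 2 * -c) := by
    rw [← expCosMean_add (by fun_prop) (by fun_prop)]
    congr 1 with c
    ring
  have hbulk : expCosMean μ (fun c => c * (1 - c) - (1 - c ^ 2) * -1)
      ≤ 3 * expCosMean μ (fun c => 1 - c) := by
    rw [← expCosMean_const_mul]
    exact expCosMean_mono (by fun_prop) (by fun_prop) fun c ⟨_, hc⟩ => by nlinarith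
  have htail : expCosMean μ (fun c => (1 - c) ^ 2 * -c) ≤ 4 := by
    refine expCosMean_le_of_forall_le (by fun_prop) fun c ⟨hc₁, hc₂⟩ => ?_
    rcases le_total 0 c with hc | hc
    · have := mul_nonpos_of_nonneg_of_nonpos (exp_pos (μ * c)).le
        (mul_nonpos_of_nonneg_of_nonpos (sq_nonneg (1 - c)) (neg_nonpos.2 hc))
      linarith
    · have hexp : exp (μ * c) ≤ 1 := exp_le_one_iff.2 (mul_nonpos_of_nonneg_of_nonpos hμ hc)
      have hpoly : (1 - c) ^ 2 * -c ≤ 4 := by nlinarith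
      nlinarith [exp_pos (μ * c), mul_nonneg (sq_nonneg (1 - c)) (neg_nonneg.2 hc)]
  have hlower := exp_half_div_le_expCosMean_one_sub hμ
  have hμ_le : μ ≤ 2 * exp (μ / 2) := by linarith [add_one_le_exp (μ / 2)]
  -- `771 = 3 + 4 * 2 * 96`
  rw [hsplit, mul_add, ← hstein]
  nlinarith

noncomputable def correction (μ : ℝ) : ℝ :=
  2 * μ + besselI 0 μ / (besselI 0 μ + besselI 1 μ)
    - besselI 0 μ / (besselI 0 μ - besselI 1 μ)

theorem correction_neg (μ : ℝ) : correction (-μ) = -correction μ := by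
  simp only [correction, besselI_zero_neg, besselI_one_neg]
  ring

theorem abs_correction_le_of_nonneg {μ : ℝ} (hμ : 0 ≤ μ) : |correction μ| ≤ 771 := by
  set M₁ := expCosMean μ (fun c => 1 - c)
  set M₂ := expCosMean μ (fun c => (1 - c) ^ 2)
  have hM₁ : 0 < M₁ := (exp_half_div_le_expCosMean_one_sub hμ).trans_lt' (by positivity)
  have hM₂ : 0 ≤ μ * M₂ := mul_nonneg hμ (expCosMean_nonneg fun c _ => sq_nonneg _)
  have hI₁ : 0 ≤ besselI 1 μ := by
    rw [besselI_one_eq_mul_expCosMean]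
    exact mul_nonneg hμ (expCosMean_nonneg fun c ⟨hc₁, hc₂⟩ => by nlinarith)
  have hdiff : besselI 0 μ - besselI 1 μ = M₁ := besselI_zero_sub_besselI_one μ
  have hI₁eq : besselI 1 μ = μ * (2 * M₁ - M₂) := besselI_one_eq_mul_sub μ
  have hI₀ : 0 < besselI 0 μ := by linarith
  have hratio : besselI 0 μ / (besselI 0 μ + besselI 1 μ) ≤ 1 :=
    (div_le_one (by positivity)).2 (by linarith)
  have htail : μ * M₂ / M₁ ≤ 771 := (div_le_iff₀ hM₁).2 (mul_expCosMean_sq_le hμ)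
  have hsecond : besselI 0 μ / (besselI 0 μ - besselI 1 μ) = 1 + 2 * μ - μ * M₂ / M₁ := by
    rw [hdiff, show besselI 0 μ = besselI 1 μ + M₁ by linarith, hI₁eq]
    field_simp
    ring
  rw [correction, hsecond, abs_le]
  constructor <;>
    nlinarith [div_nonneg hM₂ hM₁.le, div_nonneg hI₀.le (add_nonneg hI₀.le hI₁)]

theorem abs_correction_le (μ : ℝ) : |correction μ| ≤ 771 := by
  rcases le_total 0 μ with hμ | hμ
  · exact abs_correction_le_of_nonneg hμ
  · rw [← neg_neg μ, correction_neg, abs_neg]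
    exact abs_correction_le_of_nonneg (neg_nonneg.2 hμ)

/-- The quantity `2μ + I₀/(I₀+I₁) − I₀/(I₀−I₁)` (the derivative in `q` of the
correction term `ΔS = S − Ŝ` of the 2D entropy decomposition, expressed in the
variable `μ`) is uniformly bounded over `μ ∈ ℝ`. -/
theorem deriv_correction_2d_uniformly_bounded :
    ∃ C : ℝ, 0 < C ∧ ∀ μ : ℝ,
      |2 * μ + besselI 0 μ / (besselI 0 μ + besselI 1 μ)
        - besselI 0 μ / (besselI 0 μ - besselI 1 μ)| ≤ C :=
  ⟨771, by norm_num, abs_correction_le⟩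
end

section
/- Define q̃(μ) = I₁(μ)/(2 I₀(μ)) and ΔS̃(μ) = 2μ q̃(μ) − ln I₀(μ) + (1/2) ln((1/2 + q̃(μ))(1/2 − q̃(μ))) for μ ∈ ℝ. Then there exists a constant C > 0 such that for all μ₁, μ₂ ∈ ℝ, |ΔS̃(μ₁) − ΔS̃(μ₂)| ≤ C |q̃(μ₁) − q̃(μ₂)|. (This is the Lipschitz continuity of the correction term in the two-dimensional entropy decomposition S(q) = −(1/2)ln((1/2+q)(1/2−q)) + ΔS(q).) -/
open Real Filter

/-- `q̃(μ) = I₁(μ)/(2 I₀(μ))`, the 2D order parameter of the Bingham distribution. -/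
noncomputable def qTilde (μ : ℝ) : ℝ := besselI 1 μ / (2 * besselI 0 μ)

/-- The 2D entropy correction term, expressed in the variable `μ`:
`ΔS̃(μ) = 2μ q̃(μ) − ln I₀(μ) + (1/2) ln((1/2 + q̃(μ))(1/2 − q̃(μ)))`. -/
noncomputable def deltaS2d (μ : ℝ) : ℝ :=
  2 * μ * qTilde μ - Real.log (besselI 0 μ)
    + (1/2) * Real.log ((1/2 + qTilde μ) * (1/2 - qTilde μ))


/-!
Write `mₙ(μ) = ∫₀^{2π} cosⁿθ e^{μ cos θ} dθ`, so that `q̃ = m₁ / (2 m₀)`. Then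
`q̃' = (m₀ m₂ - m₁²) / (2 m₀²) ≥ 0` by Cauchy–Schwarz and `ΔS̃' = q̃' s` with
`s = 2μ - q̃ / ((1/2 + q̃)(1/2 - q̃))`, so `C q̃ ± ΔS̃` are monotone once `|s| ≤ C`.
Integrating by parts against `sin θ` gives `m₁ = μ (m₀ - m₂)`, whence
`s = 2μ (m₀ m₂ - m₁²) / (m₀² - m₁²)`. This is odd in `μ`, and for `μ ≥ 0` it is at most
`2μ E / D`, where `E = ∫ (1 - cos θ)² e^{μ cos θ}` and `D = ∫ (1 - cos θ) e^{μ cos θ}`.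
Integrating by parts against `sin θ (1 - cos θ)` gives `μ E ≤ 3 D + 8π`, and pairing `θ` with
`θ + π` gives `D ≥ π`; hence `|s| ≤ 22`.
-/

open MeasureTheory

theorem abs_sub_le_mul_abs_sub_of_hasDerivAt {f q f' q' : ℝ → ℝ} {C : ℝ}
    (hf : ∀ x, HasDerivAt f (f' x) x) (hq : ∀ x, HasDerivAt q (q' x) x)
    (hq' : ∀ x, 0 ≤ q' x) (hfq : ∀ x, |f' x| ≤ C * q' x) (a b : ℝ) :
    |f a - f b| ≤ C * |q a - q b| := by
  wlog hab : a ≤ b generalizing a b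
  · rw [abs_sub_comm, abs_sub_comm (q a)]
    exact this b a (le_of_not_ge hab)
  have hupper := monotone_of_hasDerivAt_nonneg (fun x => ((hq x).const_mul C).sub (hf x))
    (fun x => sub_nonneg.2 ((le_abs_self _).trans (hfq x))) hab
  have hlower := monotone_of_hasDerivAt_nonneg (fun x => ((hq x).const_mul C).add (hf x))
    (fun x => show 0 ≤ C * q' x + f' x by linarith [neg_abs_le (f' x), hfq x]) hab
  simp only [Pi.add_apply, Pi.sub_apply] at hupper hlower
  rw [abs_sub_comm (q a), abs_of_nonneg (sub_nonneg.2 (monotone_of_hasDerivAt_nonneg hq hq' hab)),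
    abs_le]
  constructor <;> linarith

noncomputable def expCosMoment (w : ℝ → ℝ) (μ : ℝ) : ℝ :=
  ∫ θ in (0:ℝ)..2 * π, w θ * exp (μ * cos θ)

section expCosMoment

variable {w v : ℝ → ℝ} {μ : ℝ}

theorem intervalIntegrable_mul_exp_mul_cos (hw : Continuous w) (μ a b : ℝ) :
    IntervalIntegrable (fun θ => w θ * exp (μ * cos θ)) volume a b :=
  (by fun_prop : Continuous fun θ => w θ * exp (μ * cos θ)).intervalIntegrable a b

theorem expCosMoment_sub (hw : Continuous w) (hv : Continuous v) :
    expCosMoment (fun θ => w θ - v θ) μ = expCosMoment w μ - expCosMoment v μ := by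
  simp only [expCosMoment, sub_mul]
  exact intervalIntegral.integral_sub (intervalIntegrable_mul_exp_mul_cos hw μ _ _)
    (intervalIntegrable_mul_exp_mul_cos hv μ _ _)

theorem expCosMoment_const_mul (c : ℝ) (w : ℝ → ℝ) (μ : ℝ) :
    expCosMoment (fun θ => c * w θ) μ = c * expCosMoment w μ := by
  simp only [expCosMoment, mul_assoc]
  exact intervalIntegral.integral_const_mul c _

theorem expCosMoment_nonneg (hw : ∀ θ, 0 ≤ w θ) : 0 ≤ expCosMoment w μ :=
  intervalIntegral.integral_nonneg (by positivity) fun θ _ => mul_nonneg (hw θ) (exp_pos _).le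

theorem expCosMoment_mono (hw : Continuous w) (hv : Continuous v) (hwv : ∀ θ, w θ ≤ v θ) :
    expCosMoment w μ ≤ expCosMoment v μ :=
  intervalIntegral.integral_mono_on (by positivity) (intervalIntegrable_mul_exp_mul_cos hw μ _ _)
    (intervalIntegrable_mul_exp_mul_cos hv μ _ _)
    fun θ _ => mul_le_mul_of_nonneg_right (hwv θ) (exp_pos _).le

theorem expCosMoment_le_of_forall_le (hw : Continuous w) {B : ℝ}
    (hB : ∀ θ, w θ * exp (μ * cos θ) ≤ B) : expCosMoment w μ ≤ 2 * π * B := by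
  have := intervalIntegral.integral_mono_on (by positivity)
    (intervalIntegrable_mul_exp_mul_cos hw μ 0 (2 * π)) intervalIntegrable_const fun θ _ => hB θ
  simpa [expCosMoment] using this

theorem expCosMoment_neg (hw : Function.Periodic w (2 * π)) :
    expCosMoment w (-μ) = expCosMoment (fun θ => w (θ + π)) μ := by
  have hper : Function.Periodic (fun θ => w θ * exp (-μ * cos θ)) (2 * π) := fun θ => by
    simp [hw θ]
  have hshifted : expCosMoment (fun θ => w (θ + π)) μ
      = ∫ θ in (0:ℝ)..2 * π, (fun θ => w θ * exp (-μ * cos θ)) (θ + π) := by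
    simp [expCosMoment, cos_add_pi]
  rw [hshifted, intervalIntegral.integral_comp_add_right (fun θ => w θ * exp (-μ * cos θ)),
    zero_add, add_comm, hper.intervalIntegral_add_eq π 0, zero_add, expCosMoment]

theorem hasDerivAt_expCosMoment (hw : Continuous w) (μ : ℝ) :
    HasDerivAt (expCosMoment w) (expCosMoment (fun θ => w θ * cos θ) μ) μ := by
  obtain ⟨K, hK⟩ := (isCompact_uIcc (a := (0:ℝ)) (b := 2 * π)).exists_bound_of_continuousOn
    hw.continuousOn
  have hderiv (x θ : ℝ) : HasDerivAt (fun x => w θ * exp (x * cos θ))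
      (w θ * cos θ * exp (x * cos θ)) x := by
    simpa [mul_comm, mul_assoc, mul_left_comm] using
      (((hasDerivAt_id x).mul_const (cos θ)).exp).const_mul (w θ)
  refine (intervalIntegral.hasDerivAt_integral_of_dominated_loc_of_deriv_le
    (bound := fun _ => K * exp (|μ| + 1)) (Metric.ball_mem_nhds μ one_pos)
    (.of_forall fun x => (intervalIntegrable_mul_exp_mul_cos hw x _ _).1.aestronglyMeasurable)
    (intervalIntegrable_mul_exp_mul_cos hw μ _ _)
    (intervalIntegrable_mul_exp_mul_cos (hw.mul continuous_cos) μ _ _).1.aestronglyMeasurable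
    (ae_of_all _ fun θ hθ x hx => ?_) intervalIntegrable_const
    (ae_of_all _ fun θ _ x _ => hderiv x θ)).2
  have hx : |x| ≤ |μ| + 1 := by
    have := abs_sub_abs_le_abs_sub x μ
    rw [Metric.mem_ball, Real.dist_eq] at hx
    linarith
  have hexp : exp (x * cos θ) ≤ exp (|μ| + 1) := exp_le_exp.2 <| by
    calc x * cos θ ≤ |x| * |cos θ| := (le_abs_self _).trans (abs_mul _ _).le
      _ ≤ (|μ| + 1) * 1 := mul_le_mul hx (abs_cos_le_one θ) (abs_nonneg _) (by positivity)
      _ = |μ| + 1 := mul_one _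
  have hwθ : ‖w θ‖ ≤ K := hK θ (Set.uIoc_subset_uIcc hθ)
  have hK₀ : 0 ≤ K := (norm_nonneg _).trans hwθ
  rw [norm_mul, norm_mul, Real.norm_of_nonneg (exp_pos _).le]
  calc ‖w θ‖ * ‖cos θ‖ * exp (x * cos θ) ≤ K * 1 * exp (|μ| + 1) :=
        mul_le_mul (mul_le_mul hwθ (abs_cos_le_one θ) (norm_nonneg _) hK₀) hexp (exp_pos _).le
          (by positivity)
    _ = K * exp (|μ| + 1) := by ring

theorem expCosMoment_eq_mul_expCosMoment_mul_sin {F F' : ℝ → ℝ}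
    (hF : ∀ θ, HasDerivAt F (F' θ) θ) (hF' : Continuous F') (hper : F (2 * π) = F 0) (μ : ℝ) :
    expCosMoment F' μ = μ * expCosMoment (fun θ => F θ * sin θ) μ := by
  have hexp (θ : ℝ) : HasDerivAt (fun θ => exp (μ * cos θ))
      (-(μ * sin θ) * exp (μ * cos θ)) θ := by
    simpa [mul_comm] using (((hasDerivAt_cos θ).const_mul μ).exp)
  have hparts := intervalIntegral.integral_mul_deriv_eq_deriv_mul (a := 0) (b := 2 * π)
    (fun θ _ => hF θ)
    (fun θ _ => hexp θ) (hF'.intervalIntegrable _ _) ((by fun_prop : Continuous fun θ =>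
      -(μ * sin θ) * exp (μ * cos θ)).intervalIntegrable _ _)
  rw [hper, cos_two_pi, cos_zero, sub_self, zero_sub] at hparts
  calc expCosMoment F' μ = -∫ θ in (0:ℝ)..2 * π, F θ * (-(μ * sin θ) * exp (μ * cos θ)) := by
        rw [hparts, neg_neg, expCosMoment]
    _ = μ * expCosMoment (fun θ => F θ * sin θ) μ := by
        rw [expCosMoment, ← intervalIntegral.integral_const_mul, ← intervalIntegral.integral_neg]
        congr 1; ext θ; ring

end expCosMoment

noncomputable def cosMoment (n : ℕ) (μ : ℝ) : ℝ := expCosMoment (fun θ => cos θ ^ n) μ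

section cosMoment

variable {μ : ℝ}

theorem expCosMoment_eq_of_quadratic {w : ℝ → ℝ} {a b c : ℝ}
    (hw : ∀ θ, w θ = a + b * cos θ + c * cos θ ^ 2) (μ : ℝ) :
    expCosMoment w μ = a * cosMoment 0 μ + b * cosMoment 1 μ + c * cosMoment 2 μ := by
  simp only [funext hw, cosMoment, expCosMoment, add_mul]
  rw [intervalIntegral.integral_add (Continuous.intervalIntegrable (by fun_prop) _ _)
      (Continuous.intervalIntegrable (by fun_prop) _ _),
    intervalIntegral.integral_add (Continuous.intervalIntegrable (by fun_prop) _ _)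
      (Continuous.intervalIntegrable (by fun_prop) _ _)]
  simp only [mul_assoc, intervalIntegral.integral_const_mul, pow_zero, pow_one, one_mul]

theorem hasDerivAt_cosMoment (n : ℕ) (μ : ℝ) :
    HasDerivAt (cosMoment n) (cosMoment (n + 1) μ) μ := by
  have h := hasDerivAt_expCosMoment (w := fun θ => cos θ ^ n) (by fun_prop) μ
  simp only [← pow_succ] at h
  exact h

theorem cosMoment_neg (n : ℕ) (μ : ℝ) : cosMoment n (-μ) = (-1) ^ n * cosMoment n μ := by
  rw [cosMoment, expCosMoment_neg fun θ => by simp, cosMoment, ← expCosMoment_const_mul]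
  congr 1
  ext θ
  rw [cos_add_pi, neg_pow]

theorem cosMoment_zero_pos (μ : ℝ) : 0 < cosMoment 0 μ := by
  simpa [cosMoment, expCosMoment] using intervalIntegral.intervalIntegral_pos_of_pos
    (intervalIntegrable_mul_exp_mul_cos continuous_const μ 0 (2 * π))
    (fun θ => by positivity : ∀ θ, 0 < (1 : ℝ) * exp (μ * cos θ)) (by positivity)

theorem cosMoment_one_eq (μ : ℝ) : cosMoment 1 μ = μ * (cosMoment 0 μ - cosMoment 2 μ) := by
  have hparts := expCosMoment_eq_mul_expCosMoment_mul_sin hasDerivAt_sin continuous_cos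
    (by simp) μ
  rw [expCosMoment_eq_of_quadratic (w := cos) (a := 0) (b := 1) (c := 0) (fun θ => by ring),
    expCosMoment_eq_of_quadratic (a := 1) (b := 0) (c := -1)
      (fun θ => by rw [← sq, sin_sq]; ring)] at hparts
  linarith

theorem cosMoment_one_sq_le (μ : ℝ) : cosMoment 1 μ ^ 2 ≤ cosMoment 0 μ * cosMoment 2 μ := by
  have hvar := expCosMoment_nonneg (μ := μ)
    (fun θ => sq_nonneg (cosMoment 0 μ * cos θ - cosMoment 1 μ))
  rw [expCosMoment_eq_of_quadratic (a := cosMoment 1 μ ^ 2)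
    (b := -2 * cosMoment 0 μ * cosMoment 1 μ) (c := cosMoment 0 μ ^ 2) (fun θ => by ring)] at hvar
  nlinarith [cosMoment_zero_pos μ]

theorem cosMoment_one_nonneg (hμ : 0 ≤ μ) : 0 ≤ cosMoment 1 μ := by
  have hle : cosMoment 2 μ ≤ cosMoment 0 μ :=
    expCosMoment_mono (continuous_cos.pow 2) continuous_const fun θ => by
      simpa using cos_sq_le_one θ
  rw [cosMoment_one_eq]
  exact mul_nonneg hμ (sub_nonneg.2 hle)

theorem pi_le_cosMoment_zero_sub_one (μ : ℝ) : π ≤ cosMoment 0 μ - cosMoment 1 μ := by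
  have hamgm (θ : ℝ) :
      2 * sin θ ^ 2 ≤ (1 - cos θ) * exp (μ * cos θ) + (1 + cos θ) * exp (-μ * cos θ) := by
    set a := (1 - cos θ) * exp (μ * cos θ)
    set b := (1 + cos θ) * exp (-μ * cos θ)
    have hab : a * b = sin θ ^ 2 := by
      rw [mul_mul_mul_comm, ← exp_add, neg_mul, add_neg_cancel, exp_zero, mul_one, sin_sq]
      ring
    have ha : 0 ≤ a := mul_nonneg (by linarith [cos_le_one θ]) (exp_pos _).le
    have hb : 0 ≤ b := mul_nonneg (by linarith [neg_one_le_cos θ]) (exp_pos _).le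
    nlinarith [sin_sq_le_one θ, sq_nonneg (a - b)]
  have hpair : 2 * π ≤
      expCosMoment (fun θ => 1 - cos θ) μ + expCosMoment (fun θ => 1 + cos θ) (-μ) := by
    rw [expCosMoment, expCosMoment, ← intervalIntegral.integral_add
      (intervalIntegrable_mul_exp_mul_cos (by fun_prop) μ _ _)
      (intervalIntegrable_mul_exp_mul_cos (by fun_prop) (-μ) _ _)]
    calc 2 * π = ∫ θ in (0:ℝ)..2 * π, 2 * sin θ ^ 2 := by
          rw [intervalIntegral.integral_const_mul, integral_sin_sq]; simp
      _ ≤ _ := intervalIntegral.integral_mono_on (by positivity)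
          ((by fun_prop : Continuous fun θ => 2 * sin θ ^ 2).intervalIntegrable _ _)
          ((intervalIntegrable_mul_exp_mul_cos (by fun_prop) μ _ _).add
            (intervalIntegrable_mul_exp_mul_cos (by fun_prop) (-μ) _ _)) fun θ _ => hamgm θ
  rw [expCosMoment_eq_of_quadratic (a := 1) (b := -1) (c := 0) (fun θ => by ring),
    expCosMoment_eq_of_quadratic (a := 1) (b := 1) (c := 0) (fun θ => by ring),
    cosMoment_neg, cosMoment_neg] at hpair
  norm_num at hpair
  linarith

theorem pi_le_cosMoment_zero_add_one (μ : ℝ) : π ≤ cosMoment 0 μ + cosMoment 1 μ := by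
  simpa [cosMoment_neg] using pi_le_cosMoment_zero_sub_one (-μ)

theorem mul_expCosMoment_one_sub_cos_sq_le (hμ : 0 ≤ μ) :
    μ * expCosMoment (fun θ => (1 - cos θ) ^ 2) μ ≤ 11 * expCosMoment (fun θ => 1 - cos θ) μ := by
  set E := expCosMoment (fun θ => (1 - cos θ) ^ 2) μ
  set S := expCosMoment (fun θ => sin θ * (1 - cos θ) * sin θ) μ
  have hsin (θ : ℝ) : sin θ * (1 - cos θ) * sin θ = (1 - cos θ) * (1 - cos θ ^ 2) := by
    rw [← sin_sq]; ring
  have hparts : expCosMoment (fun θ => cos θ * (1 - cos θ) + sin θ * sin θ) μ = μ * S :=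
    expCosMoment_eq_mul_expCosMoment_mul_sin
      (fun θ => ((hasDerivAt_sin θ).mul ((hasDerivAt_cos θ).const_sub 1)).congr_deriv (by ring))
      (by fun_prop) (by simp) μ
  have htail (θ : ℝ) :
      μ * ((1 - cos θ) ^ 2 - sin θ * (1 - cos θ) * sin θ) * exp (μ * cos θ) ≤ 4 := by
    have hrw : μ * ((1 - cos θ) ^ 2 - sin θ * (1 - cos θ) * sin θ) * exp (μ * cos θ)
        = (1 - cos θ) ^ 2 * (μ * -cos θ * exp (μ * cos θ)) := by
      rw [hsin]; ring
    have hsq : (1 - cos θ) ^ 2 ≤ 4 := by nlinarith [cos_le_one θ, neg_one_le_cos θ]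
    rw [hrw]
    rcases le_total 0 (cos θ) with hc | hc
    · have : μ * -cos θ * exp (μ * cos θ) ≤ 0 :=
        mul_nonpos_of_nonpos_of_nonneg (mul_nonpos_of_nonneg_of_nonpos hμ (neg_nonpos.2 hc))
          (exp_pos _).le
      nlinarith [sq_nonneg (1 - cos θ)]
    · have hx : 0 ≤ μ * -cos θ * exp (μ * cos θ) :=
        mul_nonneg (by nlinarith) (exp_pos _).le
      have hxe : μ * -cos θ * exp (μ * cos θ) ≤ 1 := by
        have h1 := add_one_le_exp (μ * -cos θ)
        have h2 : exp (μ * -cos θ) * exp (μ * cos θ) = 1 := by rw [← exp_add]; simp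
        nlinarith [exp_pos (μ * cos θ)]
      nlinarith
  have hE : μ * E - μ * S ≤ 2 * π * 4 := by
    rw [← mul_sub, ← expCosMoment_sub (by fun_prop) (by fun_prop), ← expCosMoment_const_mul]
    exact expCosMoment_le_of_forall_le (by fun_prop) htail
  have hEq : E = 1 * cosMoment 0 μ + -2 * cosMoment 1 μ + 1 * cosMoment 2 μ :=
    expCosMoment_eq_of_quadratic (fun θ => by ring) μ
  have hE0 : 0 ≤ E := expCosMoment_nonneg fun θ => sq_nonneg _
  rw [expCosMoment_eq_of_quadratic (a := 1) (b := 1) (c := -2)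
    (fun θ => by rw [← sq, sin_sq]; ring)] at hparts
  rw [expCosMoment_eq_of_quadratic (a := 1) (b := -1) (c := 0) (fun θ => by ring)]
  linarith [pi_le_cosMoment_zero_sub_one μ]

end cosMoment

theorem besselI_zero_eq_s3 (μ : ℝ) : besselI 0 μ = cosMoment 0 μ / (2 * π) := by
  simp [besselI, cosMoment, expCosMoment, div_eq_inv_mul]

theorem besselI_one_eq_s3 (μ : ℝ) : besselI 1 μ = cosMoment 1 μ / (2 * π) := by
  simp [besselI, cosMoment, expCosMoment, div_eq_inv_mul, mul_comm]

theorem besselI_zero_pos (μ : ℝ) : 0 < besselI 0 μ := by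
  rw [besselI_zero_eq_s3]
  exact div_pos (cosMoment_zero_pos μ) (by positivity)

theorem hasDerivAt_besselI_zero (μ : ℝ) : HasDerivAt (besselI 0) (besselI 1 μ) μ := by
  rw [funext besselI_zero_eq_s3, besselI_one_eq_s3]
  exact (hasDerivAt_cosMoment 0 μ).div_const _

theorem qTilde_eq (μ : ℝ) : qTilde μ = cosMoment 1 μ / (2 * cosMoment 0 μ) := by
  rw [qTilde, besselI_zero_eq_s3, besselI_one_eq_s3]
  field_simp [(cosMoment_zero_pos μ).ne', pi_ne_zero]

theorem qTilde_neg (μ : ℝ) : qTilde (-μ) = -qTilde μ := by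
  simp [qTilde_eq, cosMoment_neg, neg_div]

theorem half_add_qTilde_mul_half_sub_qTilde (μ : ℝ) :
    (1 / 2 + qTilde μ) * (1 / 2 - qTilde μ)
      = (cosMoment 0 μ - cosMoment 1 μ) * (cosMoment 0 μ + cosMoment 1 μ)
        / (4 * cosMoment 0 μ ^ 2) := by
  rw [qTilde_eq]
  field_simp [(cosMoment_zero_pos μ).ne']
  ring

theorem half_add_qTilde_mul_half_sub_qTilde_pos (μ : ℝ) :
    0 < (1 / 2 + qTilde μ) * (1 / 2 - qTilde μ) := by
  rw [half_add_qTilde_mul_half_sub_qTilde]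
  have := cosMoment_zero_pos μ
  have := pi_le_cosMoment_zero_sub_one μ
  have := pi_le_cosMoment_zero_add_one μ
  have := pi_pos
  exact div_pos (mul_pos (by linarith) (by linarith)) (by positivity)

noncomputable def qTildeDeriv (μ : ℝ) : ℝ :=
  (cosMoment 0 μ * cosMoment 2 μ - cosMoment 1 μ ^ 2) / (2 * cosMoment 0 μ ^ 2)

theorem hasDerivAt_qTilde (μ : ℝ) : HasDerivAt qTilde (qTildeDeriv μ) μ := by
  rw [funext qTilde_eq]
  have h0 := (cosMoment_zero_pos μ).ne'
  refine ((hasDerivAt_cosMoment 1 μ).div ((hasDerivAt_cosMoment 0 μ).const_mul 2)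
    (by positivity)).congr_deriv ?_
  rw [qTildeDeriv]
  field_simp

theorem qTildeDeriv_nonneg (μ : ℝ) : 0 ≤ qTildeDeriv μ :=
  div_nonneg (sub_nonneg.2 (cosMoment_one_sq_le μ)) (by positivity)

noncomputable def deltaS2dSlope (μ : ℝ) : ℝ :=
  2 * μ - qTilde μ / ((1 / 2 + qTilde μ) * (1 / 2 - qTilde μ))

theorem deltaS2dSlope_eq (μ : ℝ) :
    deltaS2dSlope μ = 2 * μ * (cosMoment 0 μ * cosMoment 2 μ - cosMoment 1 μ ^ 2)
      / ((cosMoment 0 μ - cosMoment 1 μ) * (cosMoment 0 μ + cosMoment 1 μ)) := by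
  have h0 := (cosMoment_zero_pos μ).ne'
  have hsub : cosMoment 0 μ - cosMoment 1 μ ≠ 0 := by
    linarith [pi_le_cosMoment_zero_sub_one μ, pi_pos]
  have hadd : cosMoment 0 μ + cosMoment 1 μ ≠ 0 := by
    linarith [pi_le_cosMoment_zero_add_one μ, pi_pos]
  rw [deltaS2dSlope, half_add_qTilde_mul_half_sub_qTilde, qTilde_eq]
  field_simp
  linear_combination (-4 * cosMoment 0 μ) * cosMoment_one_eq μ

theorem deltaS2dSlope_neg (μ : ℝ) : deltaS2dSlope (-μ) = -deltaS2dSlope μ := by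
  rw [deltaS2dSlope, deltaS2dSlope, qTilde_neg]
  ring

theorem deltaS2dSlope_mem_Icc {μ : ℝ} (hμ : 0 ≤ μ) : deltaS2dSlope μ ∈ Set.Icc 0 22 := by
  have hkey := mul_expCosMoment_one_sub_cos_sq_le hμ
  rw [expCosMoment_eq_of_quadratic (a := 1) (b := -2) (c := 1) (fun θ => by ring),
    expCosMoment_eq_of_quadratic (a := 1) (b := -1) (c := 0) (fun θ => by ring)] at hkey
  have h0 := cosMoment_zero_pos μ
  have h1 := cosMoment_one_nonneg hμ
  have hD := pi_le_cosMoment_zero_sub_one μ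
  have hV := sub_nonneg.2 (cosMoment_one_sq_le μ)
  set m₀ := cosMoment 0 μ
  set m₁ := cosMoment 1 μ
  set m₂ := cosMoment 2 μ
  have hden : 0 < (m₀ - m₁) * (m₀ + m₁) := mul_pos (by linarith [pi_pos]) (by linarith)
  rw [deltaS2dSlope_eq, Set.mem_Icc, le_div_iff₀ hden, div_le_iff₀ hden, zero_mul]
  refine ⟨by positivity, ?_⟩
  calc 2 * μ * (m₀ * m₂ - m₁ ^ 2) ≤ 2 * m₀ * (μ * (1 * m₀ + -2 * m₁ + 1 * m₂)) := by
        nlinarith [mul_nonneg hμ (sq_nonneg (m₀ - m₁))]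
    _ ≤ 2 * m₀ * (11 * (1 * m₀ + -1 * m₁ + 0 * m₂)) := by gcongr
    _ ≤ 22 * ((m₀ - m₁) * (m₀ + m₁)) := by nlinarith

theorem abs_deltaS2dSlope_le (μ : ℝ) : |deltaS2dSlope μ| ≤ 22 := by
  rcases le_total 0 μ with hμ | hμ
  · obtain ⟨h0, h22⟩ := deltaS2dSlope_mem_Icc hμ
    exact abs_le.2 ⟨by linarith, h22⟩
  · obtain ⟨h0, h22⟩ := deltaS2dSlope_mem_Icc (neg_nonneg.2 hμ)
    rw [deltaS2dSlope_neg] at h0 h22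
    exact abs_le.2 ⟨by linarith, by linarith⟩

theorem hasDerivAt_deltaS2d (μ : ℝ) :
    HasDerivAt deltaS2d (qTildeDeriv μ * deltaS2dSlope μ) μ := by
  have hq := hasDerivAt_qTilde μ
  have hprod := ((hq.const_add (1 / 2)).mul (hq.const_sub (1 / 2))).log
    (half_add_qTilde_mul_half_sub_qTilde_pos μ).ne'
  have hlog := (hasDerivAt_besselI_zero μ).log (besselI_zero_pos μ).ne'
  refine ((((hasDerivAt_id μ).const_mul 2).mul hq).sub hlog |>.add
    (hprod.const_mul (1 / 2))).congr_deriv ?_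
  have hI : besselI 1 μ / besselI 0 μ = 2 * qTilde μ := by
    rw [qTilde]; field_simp [(besselI_zero_pos μ).ne']
  have hpos := (half_add_qTilde_mul_half_sub_qTilde_pos μ).ne'
  rw [hI, deltaS2dSlope]
  simp only [Pi.mul_apply, id_eq]
  field_simp
  ring

/-- Lipschitz continuity of the correction term of the 2D entropy decomposition:
there is a constant `C > 0` with `|ΔS̃(μ₁) − ΔS̃(μ₂)| ≤ C |q̃(μ₁) − q̃(μ₂)|`. -/
theorem correction_2d_lipschitz :
    ∃ C : ℝ, 0 < C ∧ ∀ μ₁ μ₂ : ℝ,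
      |deltaS2d μ₁ - deltaS2d μ₂| ≤ C * |qTilde μ₁ - qTilde μ₂| :=
  ⟨22, by norm_num, abs_sub_le_mul_abs_sub_of_hasDerivAt hasDerivAt_deltaS2d hasDerivAt_qTilde
    qTildeDeriv_nonneg fun μ => by
      rw [abs_mul, abs_of_nonneg (qTildeDeriv_nonneg μ), mul_comm]
      exact mul_le_mul_of_nonneg_right (abs_deltaS2dSlope_le μ) (qTildeDeriv_nonneg μ)⟩
end

section
/- Define ψ₁(z) = e^{−z} (I₀(z) − 2z (I₀(z) − I₁(z))) for z ≥ 0. Then ψ₁ is integrable on [0, ∞) and ∫₀^∞ ψ₁(z) dz = 0. -/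
/-!
With `a = 1 - cos θ ≥ 0`, so that `e^{-z} e^{z cos θ} = e^{-a z}`, the integrals defining
`I₀` and `I₁` combine, up to the integral of `d/dθ (sin θ · e^{-a z})` over a period, into
`ψ₁(z) = (1/2π) ∫₀^{2π} a (1 - a z) e^{-a z} dθ`.
For each fixed `θ` the integrand is `a g(a z)` with `g(u) = (1 - u) e^{-u} = d/du (u e^{-u})`,
so its integral over `z ∈ [0, ∞)` vanishes, and its `L¹` norm is at most `‖g‖₁`
independently of `θ`. Fubini's theorem then lets us integrate in `z` first.
-/

open Real Filter MeasureTheory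

/-- `ψ₁(z) = e^{−z} (I₀(z) − 2z (I₀(z) − I₁(z)))`. -/
noncomputable def psi1 (z : ℝ) : ℝ :=
  Real.exp (-z) * (besselI 0 z - 2 * z * (besselI 0 z - besselI 1 z))

open Set Topology

section Fubini

variable {α β E : Type*} [MeasurableSpace α] [MeasurableSpace β]
  [NormedAddCommGroup E] {μ : Measure α} {ν : Measure β}

theorem integrable_prod_of_integral_norm_le [IsFiniteMeasure μ] [SFinite ν] {f : α × β → E}
    (hf : AEStronglyMeasurable f (μ.prod ν))
    (h_slice : ∀ᵐ x ∂μ, Integrable (fun y => f (x, y)) ν) (C : ℝ)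
    (h_norm : ∀ᵐ x ∂μ, ∫ y, ‖f (x, y)‖ ∂ν ≤ C) :
    Integrable f (μ.prod ν) := by
  refine (integrable_prod_iff hf).2
    ⟨h_slice, (integrable_const C).mono' hf.norm.integral_prod_right' ?_⟩
  filter_upwards [h_norm] with x hx
  rwa [Real.norm_of_nonneg (integral_nonneg fun _ => norm_nonneg _)]

end Fubini

section Rescaling

variable {f : ℝ → ℝ} {a : ℝ}

theorem integral_Ioi_mul_comp_mul (f : ℝ → ℝ) (ha : 0 < a) :
    ∫ z in Ioi 0, a * f (a * z) = ∫ u in Ioi 0, f u := by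
  rw [integral_const_mul, ← smul_eq_mul, integral_comp_mul_left_Ioi' f 0 ha, mul_zero]

theorem integrableOn_Ioi_mul_comp_mul (hf : IntegrableOn f (Ioi 0)) (ha : 0 ≤ a) :
    IntegrableOn (fun z => a * f (a * z)) (Ioi 0) := by
  rcases ha.eq_or_lt with rfl | ha
  · simp
  · exact ((integrableOn_Ioi_comp_mul_left_iff f 0 ha).2 (by rwa [mul_zero])).const_mul a

theorem integral_Ioi_mul_comp_mul_eq_zero (hf : ∫ u in Ioi 0, f u = 0) (ha : 0 ≤ a) :
    ∫ z in Ioi 0, a * f (a * z) = 0 := by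
  rcases ha.eq_or_lt with rfl | ha
  · simp
  · rw [integral_Ioi_mul_comp_mul f ha, hf]

theorem integral_Ioi_norm_mul_comp_mul_le (f : ℝ → ℝ) (ha : 0 ≤ a) :
    ∫ z in Ioi 0, ‖a * f (a * z)‖ ≤ ∫ u in Ioi 0, ‖f u‖ := by
  rcases ha.eq_or_lt with rfl | ha'
  · simp only [zero_mul, norm_zero, integral_zero]
    positivity
  · simp_rw [norm_mul, Real.norm_of_nonneg ha]
    rw [integral_Ioi_mul_comp_mul (fun u => ‖f u‖) ha']

end Rescaling

theorem hasDerivAt_mul_exp_neg (u : ℝ) :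
    HasDerivAt (fun u => u * exp (-u)) ((1 - u) * exp (-u)) u :=
  ((hasDerivAt_id' u).fun_mul (hasDerivAt_neg' u).exp).congr_deriv (by ring)

theorem integrableOn_one_sub_mul_exp_neg :
    IntegrableOn (fun u => (1 - u) * exp (-u)) (Ioi 0) := by
  have h := (integrableOn_exp_neg_Ioi 0).sub
    (integrableOn_rpow_mul_exp_neg_rpow (s := 1) (p := 1) (by norm_num) one_pos)
  refine h.congr_fun (fun u _ => ?_) measurableSet_Ioi
  simp only [Pi.sub_apply, Real.rpow_one]
  ring

theorem integral_one_sub_mul_exp_neg :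
    ∫ u in Ioi 0, (1 - u) * exp (-u) = 0 := by
  have h_lim : Tendsto (fun u : ℝ => u * exp (-u)) atTop (𝓝 0) := by
    simpa using tendsto_pow_mul_exp_neg_atTop_nhds_zero 1
  rw [integral_Ioi_of_hasDerivAt_of_tendsto' (fun u _ => hasDerivAt_mul_exp_neg u)
    integrableOn_one_sub_mul_exp_neg h_lim]
  simp

theorem intervalIntegral_cos_sub_mul_sin_sq_mul_exp (z : ℝ) :
    ∫ θ in 0..2 * π, (cos θ - z * sin θ ^ 2) * exp (-((1 - cos θ) * z)) = 0 := by
  have h_deriv (θ : ℝ) : HasDerivAt (fun t => sin t * exp (-((1 - cos t) * z)))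
      ((cos θ - z * sin θ ^ 2) * exp (-((1 - cos θ) * z))) θ :=
    ((hasDerivAt_sin θ).fun_mul
      ((((hasDerivAt_cos θ).const_sub 1).mul_const z).fun_neg.exp)).congr_deriv (by ring)
  rw [intervalIntegral.integral_eq_sub_of_hasDerivAt (fun θ _ => h_deriv θ)
    ((by fun_prop : Continuous _).intervalIntegrable _ _)]
  simp

noncomputable def psi1Kernel (p : ℝ × ℝ) : ℝ :=
  (1 - cos p.1) * ((1 - (1 - cos p.1) * p.2) * exp (-((1 - cos p.1) * p.2)))

theorem continuous_psi1Kernel : Continuous psi1Kernel := by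
  unfold psi1Kernel; fun_prop

theorem psi1_eq_intervalIntegral_psi1Kernel (z : ℝ) :
    psi1 z = (2 * π)⁻¹ * ∫ θ in 0..2 * π, psi1Kernel (θ, z) := by
  have h_pointwise (θ : ℝ) : psi1Kernel (θ, z) =
      exp (-z) * (exp (z * cos θ) - 2 * z * (exp (z * cos θ) - exp (z * cos θ) * cos θ)) -
        (cos θ - z * sin θ ^ 2) * exp (-((1 - cos θ) * z)) := by
    have h_exp : exp (-z) * exp (z * cos θ) = exp (-((1 - cos θ) * z)) := by
      rw [← exp_add]; ring_nf
    simp only [psi1Kernel]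
    linear_combination -(1 - 2 * z + 2 * z * cos θ) * h_exp -
      z * exp (-((1 - cos θ) * z)) * sin_sq θ
  have hE : IntervalIntegrable (fun θ => exp (z * cos θ)) volume 0 (2 * π) :=
    (by fun_prop : Continuous _).intervalIntegrable _ _
  have hEc : IntervalIntegrable (fun θ => exp (z * cos θ) * cos θ) volume 0 (2 * π) :=
    (by fun_prop : Continuous _).intervalIntegrable _ _
  have h_boundary : IntervalIntegrable (fun θ => (cos θ - z * sin θ ^ 2) * exp (-((1 - cos θ) * z)))
      volume 0 (2 * π) :=
    (by fun_prop : Continuous _).intervalIntegrable _ _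
  simp_rw [h_pointwise]
  rw [intervalIntegral.integral_sub ((hE.sub ((hE.sub hEc).const_mul _)).const_mul _) h_boundary,
    intervalIntegral_cos_sub_mul_sin_sq_mul_exp, intervalIntegral.integral_const_mul,
    intervalIntegral.integral_sub hE ((hE.sub hEc).const_mul _),
    intervalIntegral.integral_const_mul, intervalIntegral.integral_sub hE hEc]
  simp [psi1, besselI]
  ring

/-- `ψ₁` is integrable on `[0, ∞)` and its integral there vanishes. -/
theorem psi1_integrable_and_integral_zero :
    IntegrableOn psi1 (Set.Ici (0:ℝ)) volume ∧
    ∫ z in Set.Ici (0:ℝ), psi1 z = 0 := by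
  have ha (θ : ℝ) : 0 ≤ 1 - cos θ := sub_nonneg.2 (cos_le_one θ)
  have h_slice (θ : ℝ) : IntegrableOn (fun z => psi1Kernel (θ, z)) (Ioi 0) :=
    integrableOn_Ioi_mul_comp_mul integrableOn_one_sub_mul_exp_neg (ha θ)
  have h_slice_zero (θ : ℝ) : ∫ z in Ioi 0, psi1Kernel (θ, z) = 0 :=
    integral_Ioi_mul_comp_mul_eq_zero integral_one_sub_mul_exp_neg (ha θ)
  have hK : Integrable psi1Kernel
      ((volume.restrict (Ioc 0 (2 * π))).prod (volume.restrict (Ioi 0))) :=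
    integrable_prod_of_integral_norm_le continuous_psi1Kernel.aestronglyMeasurable
      (.of_forall h_slice) _ (.of_forall fun θ =>
        integral_Ioi_norm_mul_comp_mul_le (fun u => (1 - u) * exp (-u)) (ha θ))
  have h_rep : psi1 = fun z => (2 * π)⁻¹ * ∫ θ in Ioc 0 (2 * π), psi1Kernel (θ, z) := by
    ext z
    rw [psi1_eq_intervalIntegral_psi1Kernel, intervalIntegral.integral_of_le two_pi_pos.le]
  rw [integrableOn_Ici_iff_integrableOn_Ioi, integral_Ici_eq_integral_Ioi, h_rep,
    integral_const_mul, ← integral_integral_swap (f := fun θ z => psi1Kernel (θ, z)) hK]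
  exact ⟨hK.integral_prod_right.const_mul _, by simp [h_slice_zero]⟩
end

section
/- Fix 0 < a < 1 and define, for y ≥ 0, the weight w_y(u) = e^{2yu} (1−u)^{−1/2} on (0,1). Then the function y ↦ (∫_a^1 u^{−3/2} w_y(u) du) / (∫_a^1 u^{−1/2} w_y(u) du) is nonincreasing on [0, ∞). -/
open Real Filter MeasureTheory

/-- Chebyshev-type correlation inequality for integrals. -/
lemma cheb_core {μ : Measure ℝ} [SigmaFinite μ] {f g F : ℝ → ℝ}
    (hfgF : Integrable (fun u => f u * g u * F u) μ)
    (hfF : Integrable (fun u => f u * F u) μ)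
    (hgF : Integrable (fun u => g u * F u) μ)
    (hF : Integrable F μ)
    (hH : ∀ᵐ p ∂(μ.prod μ),
      (f p.1 - f p.2) * (g p.1 - g p.2) * (F p.1 * F p.2) ≤ 0) :
    (∫ u, f u * g u * F u ∂μ) * (∫ u, F u ∂μ) ≤
      (∫ u, f u * F u ∂μ) * (∫ u, g u * F u ∂μ) := by
  have h1 : Integrable (fun p : ℝ × ℝ => (f p.1 * g p.1 * F p.1) * F p.2) (μ.prod μ) :=
    hfgF.mul_prod hF
  have h2 : Integrable (fun p : ℝ × ℝ => F p.1 * (f p.2 * g p.2 * F p.2)) (μ.prod μ) :=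
    hF.mul_prod hfgF
  have h3 : Integrable (fun p : ℝ × ℝ => (f p.1 * F p.1) * (g p.2 * F p.2)) (μ.prod μ) :=
    hfF.mul_prod hgF
  have h4 : Integrable (fun p : ℝ × ℝ => (g p.1 * F p.1) * (f p.2 * F p.2)) (μ.prod μ) :=
    hgF.mul_prod hfF
  have h12 : Integrable (fun p : ℝ × ℝ => (f p.1 * g p.1 * F p.1) * F p.2
      + F p.1 * (f p.2 * g p.2 * F p.2)) (μ.prod μ) := h1.add h2
  have h123 : Integrable (fun p : ℝ × ℝ => (f p.1 * g p.1 * F p.1) * F p.2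
      + F p.1 * (f p.2 * g p.2 * F p.2)
      - (f p.1 * F p.1) * (g p.2 * F p.2)) (μ.prod μ) := h12.sub h3
  have key : (∫ p : ℝ × ℝ, ((f p.1 * g p.1 * F p.1) * F p.2
      + F p.1 * (f p.2 * g p.2 * F p.2)
      - (f p.1 * F p.1) * (g p.2 * F p.2)
      - (g p.1 * F p.1) * (f p.2 * F p.2)) ∂(μ.prod μ)) ≤ 0 := by
    refine integral_nonpos_of_ae ?_
    filter_upwards [hH] with p hp
    simp only [Pi.zero_apply]
    refine le_trans (le_of_eq (by ring)) hp
  rw [integral_sub h123 h4, integral_sub h12 h3, integral_add h1 h2] at key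
  rw [integral_prod_mul (fun u => f u * g u * F u) F,
    integral_prod_mul F (fun u => f u * g u * F u),
    integral_prod_mul (fun u => f u * F u) (fun u => g u * F u),
    integral_prod_mul (fun u => g u * F u) (fun u => f u * F u)] at key
  nlinarith [key]

/-- Integrability of `φ(u) * (1-u)^{-1/2}` on `Ioc a 1` for continuous `φ`. -/
lemma integrable_aux (a : ℝ) (ha0 : 0 < a) (ha1 : a < 1) {φ : ℝ → ℝ}
    (hφ : ContinuousOn φ (Set.Icc a 1)) :
    IntegrableOn (fun u => φ u * (1 - u) ^ (-(1:ℝ)/2)) (Set.Ioc a 1) := by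
  have hbase : IntegrableOn (fun u : ℝ => (1 - u) ^ (-(1:ℝ)/2)) (Set.Ioc a 1) := by
    have h0 : IntervalIntegrable (fun x : ℝ => x ^ (-(1:ℝ)/2)) volume (1 - a) (1 - 1) :=
      (intervalIntegral.intervalIntegrable_rpow' (by norm_num)).symm
    have h1 := h0.comp_sub_left 1
    simp only [sub_sub_cancel] at h1
    exact (intervalIntegrable_iff_integrableOn_Ioc_of_le ha1.le).mp h1
  obtain ⟨C, hC⟩ := (isCompact_Icc.image_of_continuousOn hφ).exists_bound_of_continuousOn
    continuousOn_id
  have hCb : ∀ x ∈ Set.Icc a 1, ‖φ x‖ ≤ C := fun x hx => by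
    simpa using hC (φ x) (Set.mem_image_of_mem φ hx)
  refine Integrable.bdd_mul (c := C) hbase ?_ ?_
  · exact ((hφ.mono (Set.Ioc_subset_Icc_self)).aestronglyMeasurable measurableSet_Ioc)
  · refine (ae_restrict_iff' measurableSet_Ioc).mpr (ae_of_all _ fun x hx => ?_)
    exact hCb x (Set.Ioc_subset_Icc_self hx)

set_option maxHeartbeats 4000000 in
/-- For `0 < a < 1`, the ratio
`y ↦ (∫_a^1 u^{−3/2} e^{2yu} (1−u)^{−1/2} du) / (∫_a^1 u^{−1/2} e^{2yu} (1−u)^{−1/2} du)`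
is nonincreasing on `[0, ∞)`. -/
theorem weighted_moment_ratio_antitone (a : ℝ) (ha0 : 0 < a) (ha1 : a < 1) :
    AntitoneOn (fun y : ℝ =>
      (∫ u in a..1, u ^ (-(3:ℝ)/2) * (Real.exp (2 * y * u) * (1 - u) ^ (-(1:ℝ)/2))) /
      (∫ u in a..1, u ^ (-(1:ℝ)/2) * (Real.exp (2 * y * u) * (1 - u) ^ (-(1:ℝ)/2))))
      (Set.Ici (0:ℝ)) := by
  have ha1' : a ≤ 1 := ha1.le
  -- continuity facts
  have hcont : ∀ (p y : ℝ), ContinuousOn (fun u : ℝ => u ^ p * Real.exp (2 * y * u))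
      (Set.Icc a 1) := by
    intro p y
    refine ContinuousOn.mul (continuousOn_id.rpow_const fun x hx => ?_)
      (Real.continuous_exp.comp (continuous_const.mul continuous_id)).continuousOn
    exact Or.inl (ne_of_gt (lt_of_lt_of_le ha0 hx.1))
  -- integrability of the general integrand
  have hint : ∀ (p y : ℝ), IntegrableOn
      (fun u => u ^ p * (Real.exp (2 * y * u) * (1 - u) ^ (-(1:ℝ)/2))) (Set.Ioc a 1) := by
    intro p y
    have := integrable_aux a ha0 ha1 (hcont p y)
    exact this.congr_fun (fun x _ => by ring) measurableSet_Ioc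
  -- positivity of denominators
  have hDpos : ∀ y : ℝ,
      0 < ∫ u in a..1, u ^ (-(1:ℝ)/2) * (Real.exp (2 * y * u) * (1 - u) ^ (-(1:ℝ)/2)) := by
    intro y
    refine intervalIntegral.intervalIntegral_pos_of_pos_on
      ((intervalIntegrable_iff_integrableOn_Ioc_of_le ha1').mpr (hint _ y)) (fun x hx => ?_) ha1
    have hx0 : 0 < x := lt_trans ha0 hx.1
    have hx1 : 0 < 1 - x := by linarith [hx.2]
    positivity
  intro y1 hy1 y2 _ hle
  simp only
  rw [div_le_div_iff₀ (hDpos y2) (hDpos y1)]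
  -- set up the measure and functions
  set S := Set.Ioc a 1 with hS
  set F : ℝ → ℝ := fun u => u ^ (-(1:ℝ)/2) * (Real.exp (2 * y1 * u) * (1 - u) ^ (-(1:ℝ)/2))
    with hF
  set f : ℝ → ℝ := fun u => u⁻¹ with hf
  set g : ℝ → ℝ := fun u => Real.exp (2 * (y2 - y1) * u) with hg
  -- pointwise identities on S
  have hfF : ∀ x ∈ S, x ^ (-(3:ℝ)/2) * (Real.exp (2 * y1 * x) * (1 - x) ^ (-(1:ℝ)/2))
      = f x * F x := by
    intro x hx
    have hx0 : 0 < x := lt_trans ha0 hx.1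
    have : x ^ (-(3:ℝ)/2) = x⁻¹ * x ^ (-(1:ℝ)/2) := by
      rw [← Real.rpow_neg_one x, ← Real.rpow_add hx0]
      norm_num
    simp only [hf, hF, this]; ring
  have hgF : ∀ x ∈ S, x ^ (-(1:ℝ)/2) * (Real.exp (2 * y2 * x) * (1 - x) ^ (-(1:ℝ)/2))
      = g x * F x := by
    intro x _
    have : Real.exp (2 * y2 * x) = Real.exp (2 * (y2 - y1) * x) * Real.exp (2 * y1 * x) := by
      rw [← Real.exp_add]; ring_nf
    simp only [hg, hF, this]; ring
  have hfgF : ∀ x ∈ S, x ^ (-(3:ℝ)/2) * (Real.exp (2 * y2 * x) * (1 - x) ^ (-(1:ℝ)/2))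
      = f x * g x * F x := by
    intro x hx
    have hx0 : 0 < x := lt_trans ha0 hx.1
    have h1 : x ^ (-(3:ℝ)/2) = x⁻¹ * x ^ (-(1:ℝ)/2) := by
      rw [← Real.rpow_neg_one x, ← Real.rpow_add hx0]
      norm_num
    have h2 : Real.exp (2 * y2 * x) = Real.exp (2 * (y2 - y1) * x) * Real.exp (2 * y1 * x) := by
      rw [← Real.exp_add]; ring_nf
    simp only [hf, hg, hF, h1, h2]; ring
  -- rewrite all four interval integrals as integrals over μ
  have eN2 : (∫ u in a..1, u ^ (-(3:ℝ)/2) * (Real.exp (2 * y2 * u) * (1 - u) ^ (-(1:ℝ)/2)))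
      = ∫ u, f u * g u * F u ∂(volume.restrict S) := by
    rw [intervalIntegral.integral_of_le ha1']
    exact setIntegral_congr_fun measurableSet_Ioc hfgF
  have eN1 : (∫ u in a..1, u ^ (-(3:ℝ)/2) * (Real.exp (2 * y1 * u) * (1 - u) ^ (-(1:ℝ)/2)))
      = ∫ u, f u * F u ∂(volume.restrict S) := by
    rw [intervalIntegral.integral_of_le ha1']
    exact setIntegral_congr_fun measurableSet_Ioc hfF
  have eD2 : (∫ u in a..1, u ^ (-(1:ℝ)/2) * (Real.exp (2 * y2 * u) * (1 - u) ^ (-(1:ℝ)/2)))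
      = ∫ u, g u * F u ∂(volume.restrict S) := by
    rw [intervalIntegral.integral_of_le ha1']
    exact setIntegral_congr_fun measurableSet_Ioc hgF
  have eD1 : (∫ u in a..1, u ^ (-(1:ℝ)/2) * (Real.exp (2 * y1 * u) * (1 - u) ^ (-(1:ℝ)/2)))
      = ∫ u, F u ∂(volume.restrict S) := by
    rw [intervalIntegral.integral_of_le ha1']
  rw [eN2, eN1, eD2, eD1]
  -- integrability hypotheses for cheb_core
  have i1 : IntegrableOn (fun u => f u * g u * F u) S :=
    (hint (-(3:ℝ)/2) y2).congr_fun hfgF measurableSet_Ioc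
  have i2 : IntegrableOn (fun u => f u * F u) S :=
    (hint (-(3:ℝ)/2) y1).congr_fun hfF measurableSet_Ioc
  have i3 : IntegrableOn (fun u => g u * F u) S :=
    (hint (-(1:ℝ)/2) y2).congr_fun hgF measurableSet_Ioc
  have i4 : IntegrableOn F S := hint (-(1:ℝ)/2) y1
  refine cheb_core i1 i2 i3 i4 ?_
  -- the sign condition on the product measure
  have hprod : (volume.restrict S).prod (volume.restrict S)
      = (volume.prod volume).restrict (S ×ˢ S) :=
    Measure.prod_restrict S S
  rw [hprod]
  refine (ae_restrict_iff' (measurableSet_Ioc.prod measurableSet_Ioc)).mpr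
    (ae_of_all _ fun p hp => ?_)
  obtain ⟨hu, hv⟩ := hp
  have hu0 : 0 < p.1 := lt_trans ha0 hu.1
  have hv0 : 0 < p.2 := lt_trans ha0 hv.1
  have hFu : 0 ≤ F p.1 := by
    have : 0 ≤ 1 - p.1 := by linarith [hu.2]
    simp only [hF]; positivity
  have hFv : 0 ≤ F p.2 := by
    have : 0 ≤ 1 - p.2 := by linarith [hv.2]
    simp only [hF]; positivity
  have ht : 0 ≤ 2 * (y2 - y1) := by linarith
  have hsign : (f p.1 - f p.2) * (g p.1 - g p.2) ≤ 0 := by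
    rcases le_total p.1 p.2 with h | h
    · refine mul_nonpos_of_nonneg_of_nonpos ?_ ?_
      · simp only [hf, sub_nonneg]; exact inv_anti₀ hu0 h
      · simp only [hg, sub_nonpos, Real.exp_le_exp]
        exact mul_le_mul_of_nonneg_left h ht
    · refine mul_nonpos_of_nonpos_of_nonneg ?_ ?_
      · simp only [hf, sub_nonpos]; exact inv_anti₀ hv0 h
      · simp only [hg, sub_nonneg, Real.exp_le_exp]
        exact mul_le_mul_of_nonneg_left h ht
  exact mul_nonpos_of_nonpos_of_nonneg hsign (mul_nonneg hFu hFv)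
end

section
/- Let α > 0 and let q ∈ Δ₀ be a critical point of the quasi-entropy bulk energy F̂_b(q) = −(1/2) Σᵢ ln(qᵢ + 1/3) − (α/2) Σᵢ qᵢ² subject to the constraint q₁ + q₂ + q₃ = 0; that is, suppose there exists λ ∈ ℝ such that −1/(2(qᵢ + 1/3)) − α qᵢ = λ for i = 1, 2, 3. Then at least two of q₁, q₂, q₃ are equal (every stationary point is uniaxial). -/
open Real

/-- Every critical point of the quasi-entropy bulk energy
`F̂_b(q) = −(1/2) Σᵢ ln(qᵢ + 1/3) − (α/2) Σᵢ qᵢ²` on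
`Δ₀ = {q : q₁+q₂+q₃ = 0, qᵢ ∈ (−1/3, 2/3)}` (i.e. a point satisfying the
Lagrange condition `−1/(2(qᵢ+1/3)) − α qᵢ = λ` for all `i`) is uniaxial:
at least two of the `qᵢ` coincide. -/
theorem quasi_entropy_critical_points_uniaxial (α : ℝ) (hα : 0 < α)
    (q : Fin 3 → ℝ) (hsum : q 0 + q 1 + q 2 = 0)
    (hmem : ∀ i, q i ∈ Set.Ioo (-(1/3) : ℝ) (2/3))
    (hcrit : ∃ lam : ℝ, ∀ i, -1 / (2 * (q i + 1/3)) - α * q i = lam) :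
    q 0 = q 1 ∨ q 0 = q 2 ∨ q 1 = q 2 := by
  obtain ⟨lam, hlam⟩ := hcrit
  have key : ∀ i, 2*α*(q i)^2 + 2*(lam + α/3)*(q i) + (2*lam/3 + 1) = 0 := by
    intro i
    have hpos : (0:ℝ) < q i + 1/3 := by have := (hmem i).1; linarith
    have hne : q i + 1/3 ≠ 0 := ne_of_gt hpos
    have hne2 : (2:ℝ) * (q i + 1/3) ≠ 0 := by positivity
    have h2 : (-1:ℝ) / (2 * (q i + 1/3)) = lam + α * q i := by linarith [hlam i]
    have h3 := (div_eq_iff hne2).mp h2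
    linear_combination -h3
  by_contra hcon
  push_neg at hcon
  obtain ⟨h01, h02, h12⟩ := hcon
  have f01 : (q 0 - q 1) * (2*α*(q 0 + q 1) + 2*(lam + α/3)) = 0 := by
    linear_combination key 0 - key 1
  have f21 : (q 2 - q 1) * (2*α*(q 2 + q 1) + 2*(lam + α/3)) = 0 := by
    linear_combination key 2 - key 1
  have s01 : 2*α*(q 0 + q 1) + 2*(lam + α/3) = 0 :=
    (mul_eq_zero.mp f01).resolve_left (sub_ne_zero_of_ne h01)
  have s21 : 2*α*(q 2 + q 1) + 2*(lam + α/3) = 0 :=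
    (mul_eq_zero.mp f21).resolve_left (sub_ne_zero_of_ne (Ne.symm h12))
  have : 2*α*(q 0 - q 2) = 0 := by linarith
  have h02' : q 0 - q 2 = 0 := by
    rcases mul_eq_zero.mp this with h | h
    · nlinarith
    · exact h
  exact h02 (by linarith)
end

section
/- Let α > 4 and set s₊ = (α + 3√(α(α−4)))/(4α) and s₋ = (α − 3√(α(α−4)))/(4α). Then s₊ and s₋ lie in the interval (−1/2, 1), and each s ∈ {s₊, s₋} satisfies the stationarity equation −1/(2s + 1) + 1/(1 − s) − (2α/3) s = 0; equivalently, s₀ = 0, s₊, s₋ are exactly the roots of s(4α s² − 2α s + 9 − 2α) = 0. Consequently, for α > 4 the points q = s·(2/3, −1/3, −1/3) with s ∈ {0, s₊, s₋} are critical points of the quasi-entropy bulk energy F̂_b(q) = −(1/2) Σᵢ ln(qᵢ + 1/3) − (α/2) Σᵢ qᵢ² restricted to the plane q₁ + q₂ + q₃ = 0. -/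
open Real

/-!
With `q = s·(2/3, −1/3, −1/3)`, the Lagrange condition compares only two distinct values, and
their difference is `3/2` times the stationarity expression
`−1/(2s+1) + 1/(1−s) − (2α/3)s = s(4αs² − 2αs + 9 − 2α) / (3(2s+1)(1−s))`.
So the critical uniaxial points are the roots `0, s₊, s₋` of this cubic in `(−1/2, 1)`;
`s₊, s₋` come from the quadratic formula, the discriminant being `(6√(α(α−4)))²`,
and they lie in `(−1/2, 1)` because `√(α(α−4)) < α`.
-/

theorem sqrt_mul_sub_four_lt {α : ℝ} (hα : 0 < α) : √(α * (α - 4)) < α :=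
  (sqrt_lt' hα).2 (by nlinarith)

theorem add_three_mul_div_mem_Ioo {α e : ℝ} (he : |e| < α) :
    (α + 3 * e) / (4 * α) ∈ Set.Ioo (-(1 / 2) : ℝ) 1 := by
  obtain ⟨he₁, he₂⟩ := abs_lt.1 he
  have h4α : 0 < 4 * α := by linarith
  exact ⟨(lt_div_iff₀ h4α).2 (by linarith), (div_lt_iff₀ h4α).2 (by linarith)⟩

theorem uniaxial_quadratic_eq_zero_iff {α d : ℝ} (hα : α ≠ 0) (hd : d ^ 2 = α * (α - 4))
    (s : ℝ) :
    4 * α * s ^ 2 - 2 * α * s + 9 - 2 * α = 0 ↔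
      s = (α + 3 * d) / (4 * α) ∨ s = (α - 3 * d) / (4 * α) := by
  have hdiscrim : discrim (4 * α) (-2 * α) (9 - 2 * α) = (6 * d) * (6 * d) := by
    rw [discrim]; linear_combination (-36) * hd
  have hroots := quadratic_eq_zero_iff (mul_ne_zero four_ne_zero hα) hdiscrim s
  have hp : (-(-2 * α) + 6 * d) / (2 * (4 * α)) = (α + 3 * d) / (4 * α) := by
    field_simp; ring
  have hm : (-(-2 * α) - 6 * d) / (2 * (4 * α)) = (α - 3 * d) / (4 * α) := by
    field_simp; ring
  rw [hp, hm] at hroots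
  rw [← hroots, show 4 * α * s ^ 2 - 2 * α * s + 9 - 2 * α =
    4 * α * (s * s) + -2 * α * s + (9 - 2 * α) by ring]

theorem stationarity_eq_cubic_div {α s : ℝ} (h₁ : 2 * s + 1 ≠ 0) (h₂ : 1 - s ≠ 0) :
    -1 / (2 * s + 1) + 1 / (1 - s) - (2 * α / 3) * s =
      s * (4 * α * s ^ 2 - 2 * α * s + 9 - 2 * α) / (3 * (2 * s + 1) * (1 - s)) := by
  field_simp
  ring

theorem uniaxial_lagrange_sub (α s : ℝ) :
    (-1 / (2 * (2 * s / 3 + 1 / 3)) - α * (2 * s / 3)) -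
        (-1 / (2 * (-s / 3 + 1 / 3)) - α * (-s / 3)) =
      3 / 2 * (-1 / (2 * s + 1) + 1 / (1 - s) - (2 * α / 3) * s) := by
  rw [show 2 * (2 * s / 3 + 1 / 3) = 2 / 3 * (2 * s + 1) by ring,
    show 2 * (-s / 3 + 1 / 3) = 2 / 3 * (1 - s) by ring, div_mul_eq_div_div, div_mul_eq_div_div]
  ring

theorem exists_lagrange_of_stationary {α s : ℝ}
    (hs : -1 / (2 * s + 1) + 1 / (1 - s) - (2 * α / 3) * s = 0) :
    ∃ lam : ℝ, ∀ i : Fin 3,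
      -1 / (2 * ((![2 * s / 3, -s / 3, -s / 3] : Fin 3 → ℝ) i + 1/3))
        - α * (![2 * s / 3, -s / 3, -s / 3] : Fin 3 → ℝ) i = lam := by
  refine ⟨-1 / (2 * (-s / 3 + 1 / 3)) - α * (-s / 3), fun i => ?_⟩
  fin_cases i
  · exact sub_eq_zero.1 ((uniaxial_lagrange_sub α s).trans (by rw [hs, mul_zero]))
  · rfl
  · rfl

/-- For `α > 4`, the numbers `s₊ = (α + 3√(α(α−4)))/(4α)` and
`s₋ = (α − 3√(α(α−4)))/(4α)` lie in `(−1/2, 1)`, satisfy the stationarity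
equation `−1/(2s+1) + 1/(1−s) − (2α/3)s = 0`; equivalently `0, s₊, s₋` are
exactly the roots of `s(4αs² − 2αs + 9 − 2α) = 0`. Consequently the points
`q = s·(2/3, −1/3, −1/3)` with `s ∈ {0, s₊, s₋}` are critical points of the
quasi-entropy bulk energy restricted to the plane `q₁ + q₂ + q₃ = 0`
(i.e. they satisfy the Lagrange condition `−1/(2(qᵢ+1/3)) − α qᵢ = λ`). -/
theorem quasi_entropy_uniaxial_stationary_points (α sp sm : ℝ) (hα : 4 < α)
    (hsp : sp = (α + 3 * Real.sqrt (α * (α - 4))) / (4 * α))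
    (hsm : sm = (α - 3 * Real.sqrt (α * (α - 4))) / (4 * α)) :
    sp ∈ Set.Ioo (-(1/2) : ℝ) 1 ∧ sm ∈ Set.Ioo (-(1/2) : ℝ) 1 ∧
    (∀ s ∈ ({sp, sm} : Set ℝ),
      -1 / (2 * s + 1) + 1 / (1 - s) - (2 * α / 3) * s = 0) ∧
    (∀ s : ℝ, s * (4 * α * s ^ 2 - 2 * α * s + 9 - 2 * α) = 0 ↔
      s = 0 ∨ s = sp ∨ s = sm) ∧
    (∀ s ∈ ({0, sp, sm} : Set ℝ), ∃ lam : ℝ, ∀ i : Fin 3,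
      -1 / (2 * ((![2 * s / 3, -s / 3, -s / 3] : Fin 3 → ℝ) i + 1/3))
        - α * (![2 * s / 3, -s / 3, -s / 3] : Fin 3 → ℝ) i = lam) := by
  have hα₀ : 0 < α := by linarith
  set d := √(α * (α - 4))
  have hd : |d| < α := by
    rw [abs_of_nonneg (sqrt_nonneg _)]; exact sqrt_mul_sub_four_lt hα₀
  have hspI : sp ∈ Set.Ioo (-(1/2) : ℝ) 1 := hsp ▸ add_three_mul_div_mem_Ioo hd
  have hsmI : sm ∈ Set.Ioo (-(1/2) : ℝ) 1 := by
    simpa only [hsm, mul_neg, ← sub_eq_add_neg] using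
      add_three_mul_div_mem_Ioo (e := -d) (by rwa [abs_neg])
  have hroots (s : ℝ) :
      s * (4 * α * s ^ 2 - 2 * α * s + 9 - 2 * α) = 0 ↔ s = 0 ∨ s = sp ∨ s = sm := by
    rw [mul_eq_zero, uniaxial_quadratic_eq_zero_iff hα₀.ne' (sq_sqrt (by nlinarith)), hsp, hsm]
  have hstat (s : ℝ) (hs : s ∈ ({0, sp, sm} : Set ℝ)) :
      -1 / (2 * s + 1) + 1 / (1 - s) - (2 * α / 3) * s = 0 := by
    have hsI : s ∈ Set.Ioo (-(1/2) : ℝ) 1 := by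
      rcases hs with rfl | rfl | rfl
      exacts [by norm_num, hspI, hsmI]
    rw [stationarity_eq_cubic_div (by linarith [hsI.1]) (by linarith [hsI.2]),
      (hroots s).2 hs, zero_div]
  refine ⟨hspI, hsmI, fun s hs => hstat s (Or.inr hs), hroots,
    fun s hs => exists_lagrange_of_stationary (hstat s hs)⟩
end
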